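/- arXiv:0902.0443 — 14 statements merged into one kernel-verified Lean document; each statement's English description precedes it below -/
import Mathlib

section
/- For n ≥ 4, a cycle C_n has the property that every k-subset of vertices is an identifying set if and only if n−1 ≤ k ≤ n. -/
open Set

variable {V : Type*}

/-- The closed neighbourhood `N[x]` of a vertex. -/
def closedNbhd (G : SimpleGraph V) (x : V) : Set V :=
  insert x (G.neighborSet x)

/-- `C` is an identifying set: all sets `N[x] ∩ C` are nonempty and pairwise distinct. -/
def IsIdentifying (G : SimpleGraph V) (C : Set V) : Prop :=
  (∀ x : V, (closedNbhd G x ∩ C).Nonempty) ∧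
    ∀ x y : V, closedNbhd G x ∩ C = closedNbhd G y ∩ C → x = y

/-- Every `k`-subset of vertices is an identifying set. -/
def EveryKIdentifying (G : SimpleGraph V) (k : ℕ) : Prop :=
  ∀ C : Set V, C.ncard = k → IsIdentifying G C

/-!
A set `C` is identifying iff it meets every closed neighbourhood `N[x]` and every symmetric
difference `N[x] ∆ N[y]` with `x ≠ y`. If `C` misses at most one vertex, it meets every set with
two elements; in a cycle of length at least four each `N[x]` and each `N[x] ∆ N[y]` has two
elements, so every set of `n - 1` or `n` vertices is identifying. Conversely
`N[0] ∆ N[1] = {-1, 2}`, so a set of at most `n - 2` vertices avoiding `-1` and `2` cannot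
separate `0` from `1`.
-/

open scoped symmDiff
open SimpleGraph

lemma Set.Nontrivial.inter_nonempty_of_compl_subsingleton {α : Type*} {S C : Set α}
    (hS : S.Nontrivial) (hC : Cᶜ.Subsingleton) : (S ∩ C).Nonempty := by
  by_contra h
  exact hS.not_subsingleton (hC.anti fun a ha haC => h ⟨a, ha, haC⟩)

namespace SimpleGraph

variable {G : SimpleGraph V}

lemma isIdentifying_iff {C : Set V} :
    IsIdentifying G C ↔ (∀ x, (closedNbhd G x ∩ C).Nonempty) ∧
      ∀ x y, x ≠ y → ((closedNbhd G x ∆ closedNbhd G y) ∩ C).Nonempty := by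
  refine and_congr_right fun _ => forall₂_congr fun x y => ?_
  rw [inter_symmDiff_distrib_right, nonempty_iff_ne_empty, ← bot_eq_empty, ne_eq, ne_eq,
    symmDiff_eq_bot, not_imp_not]

lemma closedNbhd_symmDiff_nontrivial_of_not_adj {x y : V} (hxy : x ≠ y) (hadj : ¬G.Adj x y) :
    (closedNbhd G x ∆ closedNbhd G y).Nontrivial :=
  ⟨x, Or.inl ⟨mem_insert x _, by simp [closedNbhd, hxy, hadj, G.adj_comm]⟩,
    y, Or.inr ⟨mem_insert y _, by simp [closedNbhd, hxy.symm, hadj]⟩, hxy⟩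

lemma everyKIdentifying_of_card_le [Finite V] {k : ℕ} (hk : Nat.card V ≤ k + 1)
    (hnbhd : ∀ x, (closedNbhd G x).Nontrivial)
    (hsep : ∀ x y, x ≠ y → (closedNbhd G x ∆ closedNbhd G y).Nontrivial) :
    EveryKIdentifying G k := by
  intro C hC
  have hCc : Cᶜ.Subsingleton := by
    rw [← ncard_le_one_iff_subsingleton]
    have := ncard_add_ncard_compl C
    omega
  exact isIdentifying_iff.2 ⟨fun x => (hnbhd x).inter_nonempty_of_compl_subsingleton hCc,
    fun x y hxy => (hsep x y hxy).inter_nonempty_of_compl_subsingleton hCc⟩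

lemma not_everyKIdentifying_of_ncard_symmDiff_le [Finite V] {x y : V} (hxy : x ≠ y) {k : ℕ}
    (hk : k + (closedNbhd G x ∆ closedNbhd G y).ncard ≤ Nat.card V) :
    ¬EveryKIdentifying G k := by
  intro h
  obtain ⟨C, hCS, hC⟩ := exists_subset_card_eq (s := (closedNbhd G x ∆ closedNbhd G y)ᶜ)
    (n := k) (by rw [ncard_compl]; omega)
  obtain ⟨z, hzS, hzC⟩ := (isIdentifying_iff.1 (h C hC)).2 x y hxy
  exact hCS hzC hzS

end SimpleGraph

lemma sub_one_ne_add_two {R : Type*} [CommRing R] (h3 : (3 : R) ≠ 0) (x : R) : x - 1 ≠ x + 2 :=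
  fun h => h3 (by linear_combination -h)

lemma symmDiff_consecutive_triples {R : Type*} [CommRing R] (h2 : (2 : R) ≠ 0) (h3 : (3 : R) ≠ 0)
    (x : R) : ({x - 1, x, x + 1} : Set R) ∆ {x, x + 1, x + 2} = {x - 1, x + 2} := by
  have h1 : (1 : R) ≠ 0 := fun h => h2 (by linear_combination 2 * h)
  have : x - 1 ≠ x := fun h => h1 (by linear_combination -h)
  have : x - 1 ≠ x + 1 := fun h => h2 (by linear_combination -h)
  have := sub_one_ne_add_two h3 x
  have : x + 2 ≠ x := fun h => h2 (by linear_combination h)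
  have : x + 2 ≠ x + 1 := fun h => h1 (by linear_combination h)
  ext z
  simp only [mem_symmDiff, mem_insert_iff, mem_singleton_iff]
  grind

section cycleGraph

open Fin.NatCast Fin.CommRing

variable {m : ℕ}

lemma closedNbhd_cycleGraph (x : Fin (m + 2)) :
    closedNbhd (cycleGraph (m + 2)) x = {x - 1, x, x + 1} := by
  rw [closedNbhd, cycleGraph_neighborSet, insert_comm]

lemma closedNbhd_cycleGraph_nontrivial (x : Fin (m + 2)) :
    (closedNbhd (cycleGraph (m + 2)) x).Nontrivial := by
  rw [closedNbhd_cycleGraph]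
  exact nontrivial_of_mem_mem_ne (x := x) (y := x + 1) (by simp) (by simp) (by simp)

lemma fin_three_ne_zero : (3 : Fin (m + 4)) ≠ 0 := by
  simp [Fin.ext_iff, Nat.mod_eq_of_lt]

lemma closedNbhd_cycleGraph_symmDiff_add_one (x : Fin (m + 4)) :
    closedNbhd (cycleGraph (m + 4)) x ∆ closedNbhd (cycleGraph (m + 4)) (x + 1) =
      {x - 1, x + 2} := by
  rw [closedNbhd_cycleGraph, closedNbhd_cycleGraph, add_sub_cancel_right,
    show x + 1 + 1 = x + 2 by ring]
  exact symmDiff_consecutive_triples (by simp [Fin.ext_iff, Nat.mod_eq_of_lt]) fin_three_ne_zero x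

lemma ncard_closedNbhd_cycleGraph_symmDiff_add_one (x : Fin (m + 4)) :
    (closedNbhd (cycleGraph (m + 4)) x ∆ closedNbhd (cycleGraph (m + 4)) (x + 1)).ncard = 2 := by
  rw [closedNbhd_cycleGraph_symmDiff_add_one,
    ncard_pair (sub_one_ne_add_two fin_three_ne_zero x)]

lemma closedNbhd_cycleGraph_symmDiff_nontrivial {x y : Fin (m + 4)} (hxy : x ≠ y) :
    (closedNbhd (cycleGraph (m + 4)) x ∆ closedNbhd (cycleGraph (m + 4)) y).Nontrivial := by
  have hsucc (z : Fin (m + 4)) :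
      (closedNbhd (cycleGraph (m + 4)) z ∆ closedNbhd (cycleGraph (m + 4)) (z + 1)).Nontrivial :=
    one_lt_ncard_iff_nontrivial.1 (by rw [ncard_closedNbhd_cycleGraph_symmDiff_add_one]; omega)
  by_cases hadj : (cycleGraph (m + 4)).Adj x y
  · rcases (cycleGraph_adj (n := m + 2)).1 hadj with h | h
    · rw [symmDiff_comm, sub_eq_iff_eq_add'.1 h]
      exact hsucc y
    · rw [sub_eq_iff_eq_add'.1 h]
      exact hsucc x
  · exact closedNbhd_symmDiff_nontrivial_of_not_adj hxy hadj

end cycleGraph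

theorem stmt1_general (n k : ℕ) (hn : 4 ≤ n) (hkn : k ≤ n) :
    EveryKIdentifying (SimpleGraph.cycleGraph n) k ↔ (n - 1 ≤ k ∧ k ≤ n) := by
  obtain ⟨m, rfl⟩ : ∃ m, n = m + 4 := ⟨n - 4, by omega⟩
  constructor
  · intro h
    refine ⟨?_, hkn⟩
    by_contra! hlt
    refine not_everyKIdentifying_of_ncard_symmDiff_le (x := (0 : Fin (m + 4))) (y := 0 + 1)
      (by simp) ?_ h
    rw [ncard_closedNbhd_cycleGraph_symmDiff_add_one, Nat.card_fin]
    omega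
  · rintro ⟨hk, -⟩
    refine everyKIdentifying_of_card_le ?_ closedNbhd_cycleGraph_nontrivial
      fun x y => closedNbhd_cycleGraph_symmDiff_nontrivial
    rw [Nat.card_fin]
    omega

theorem stmt1 (n k : ℕ) (hn : 4 ≤ n) (hk : 1 ≤ k) (hkn : k ≤ n) :
    EveryKIdentifying (SimpleGraph.cycleGraph n) k ↔ (n - 1 ≤ k ∧ k ≤ n) :=
  stmt1_general n k hn hkn
end

section
/- Let G be a graph on n vertices. Every k-subset of vertices of G is an identifying set if and only if for every pair of distinct sets X, Y ⊆ V with |X| ≤ 1 and |Y| ≤ 1 one has n − |N[X] △ N[Y]| ≤ k − 1, where N[∅] = ∅, N[{x}] = N[x], and △ denotes symmetric difference. -/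
open Set

variable {V : Type*}

/-- `N[X] = ⋃ x ∈ X, N[x]`. -/
def nbhdSet (G : SimpleGraph V) (X : Set V) : Set V :=
  ⋃ x ∈ X, closedNbhd G x

/-- `C` is `(1, ≤ ℓ)`-identifying. -/
def IsLIdentifying (G : SimpleGraph V) (ℓ : ℕ) (C : Set V) : Prop :=
  ∀ X Y : Set V, X.ncard ≤ ℓ → Y.ncard ≤ ℓ → X ≠ Y →
    nbhdSet G X ∩ C ≠ nbhdSet G Y ∩ C

/-- Every `k`-subset of vertices is a `(1, ≤ ℓ)`-identifying set. -/
def EveryKLIdentifying (G : SimpleGraph V) (k ℓ : ℕ) : Prop :=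
  ∀ C : Set V, C.ncard = k → IsLIdentifying G ℓ C

lemma ncard_compl' [Fintype V] (S : Set V) : Sᶜ.ncard = Fintype.card V - S.ncard := by
  have := Set.ncard_add_ncard_compl S (Set.toFinite _) (Set.toFinite _)
  rw [Nat.card_eq_fintype_card] at this
  omega

lemma key [Fintype V] {n k : ℕ} (hn : Fintype.card V = n) (hk : 1 ≤ k) (S : Set V) :
    (∀ C : Set V, C.ncard = k → (S ∩ C).Nonempty) ↔ n - S.ncard ≤ k - 1 := by
  constructor
  · intro h
    by_contra hc
    have hge : k ≤ Sᶜ.ncard := by rw [ncard_compl', hn]; omega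
    obtain ⟨C, hCsub, hCcard⟩ := Set.exists_subset_card_eq hge
    obtain ⟨v, hvS, hvC⟩ := h C hCcard
    exact (hCsub hvC) hvS
  · intro h C hC
    rw [Set.nonempty_iff_ne_empty]
    intro he
    have hsub : C ⊆ Sᶜ := fun v hv hvS => by
      have : v ∈ S ∩ C := ⟨hvS, hv⟩
      simp [he] at this
    have := Set.ncard_le_ncard hsub (Set.toFinite _)
    rw [ncard_compl', hn, hC] at this
    omega

lemma symm_inter_empty {A B C : Set V} (h : A ∩ C = B ∩ C) : symmDiff A B ∩ C = ∅ := by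
  ext v
  simp only [Set.mem_inter_iff, Set.mem_empty_iff_false, iff_false, not_and]
  intro hv hvC
  rcases hv with ⟨hA, hB⟩ | ⟨hB, hA⟩
  · exact hB ((h ▸ (⟨hA, hvC⟩ : v ∈ A ∩ C)) : v ∈ B ∩ C).1
  · exact hA ((h ▸ (⟨hB, hvC⟩ : v ∈ B ∩ C)) : v ∈ A ∩ C).1

lemma inter_eq_of_symm {A B C : Set V} (h : symmDiff A B ∩ C = ∅) : A ∩ C = B ∩ C := by
  ext v
  constructor
  · rintro ⟨hA, hC⟩
    refine ⟨?_, hC⟩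
    by_contra hB
    have : v ∈ symmDiff A B ∩ C := ⟨Or.inl ⟨hA, hB⟩, hC⟩
    simp [h] at this
  · rintro ⟨hB, hC⟩
    refine ⟨?_, hC⟩
    by_contra hA
    have : v ∈ symmDiff A B ∩ C := ⟨Or.inr ⟨hB, hA⟩, hC⟩
    simp [h] at this

lemma nbhd_singleton (G : SimpleGraph V) (x : V) : nbhdSet G {x} = closedNbhd G x := by
  simp [nbhdSet]

lemma nbhd_empty (G : SimpleGraph V) : nbhdSet G (∅ : Set V) = ∅ := by
  simp [nbhdSet]

lemma small_cases (X : Set V) (h : X.ncard ≤ 1) (hfin : X.Finite) :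
    X = ∅ ∨ ∃ x, X = {x} := by
  rcases X.eq_empty_or_nonempty with he | hne
  · exact Or.inl he
  · right
    have h1 : X.ncard = 1 := le_antisymm h ((Set.ncard_pos hfin).mpr hne)
    exact Set.ncard_eq_one.mp h1

theorem stmt4 [Fintype V] (G : SimpleGraph V) (n k : ℕ) (hn : Fintype.card V = n)
    (hk : 1 ≤ k) (hkn : k ≤ n) :
    EveryKIdentifying G k ↔
      ∀ X Y : Set V, X ≠ Y → X.ncard ≤ 1 → Y.ncard ≤ 1 →
        n - (symmDiff (nbhdSet G X) (nbhdSet G Y)).ncard ≤ k - 1 := by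
  constructor
  · intro H X Y hXY hX hY
    rw [← key hn hk]
    intro C hC
    rw [Set.nonempty_iff_ne_empty]
    intro he
    have heq : nbhdSet G X ∩ C = nbhdSet G Y ∩ C := inter_eq_of_symm he
    obtain ⟨hne, hinj⟩ := H C hC
    rcases small_cases X hX (Set.toFinite _) with rfl | ⟨x, rfl⟩ <;>
      rcases small_cases Y hY (Set.toFinite _) with rfl | ⟨y, rfl⟩
    · exact hXY rfl
    · rw [nbhd_empty, nbhd_singleton] at heq
      obtain ⟨v, hv⟩ := hne y
      rw [← heq] at hv
      simp at hv
    · rw [nbhd_empty, nbhd_singleton] at heq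
      obtain ⟨v, hv⟩ := hne x
      rw [heq] at hv
      simp at hv
    · rw [nbhd_singleton, nbhd_singleton] at heq
      exact hXY (by rw [hinj x y heq])
  · intro H C hC
    constructor
    · intro x
      have h := H {x} ∅ (by simp) (by simp) (by simp)
      rw [nbhd_singleton, nbhd_empty, show symmDiff (closedNbhd G x) (∅ : Set V) = closedNbhd G x by simp] at h
      exact (key hn hk _).mpr h C hC
    · intro x y heq
      by_contra hxy
      have h := H {x} {y} (by simpa using hxy) (by simp) (by simp)
      rw [nbhd_singleton, nbhd_singleton] at h
      have hne := (key hn hk _).mpr h C hC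
      rw [Set.nonempty_iff_ne_empty] at hne
      exact hne (symm_inter_empty heq)
end

section
/- Let G be a graph on n vertices. Every k-subset of vertices of G is an identifying set if and only if (i) the minimum degree of G satisfies δ(G) ≥ n − k, and (ii) for every pair of distinct vertices x, y: |N[x] ∩ N[y]| + |V \ (N[x] ∪ N[y])| ≤ k − 1. -/
open Set

variable {V : Type*}

lemma closedNbhd_ncard [Fintype V] (G : SimpleGraph V) (x : V) :
    (closedNbhd G x).ncard = (G.neighborSet x).ncard + 1 := by
  rw [closedNbhd, Set.ncard_insert_of_notMem (by simp) (Set.toFinite _)]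

lemma compl_ncard [Fintype V] (s : Set V) :
    s.ncard + (Set.univ \ s).ncard = Fintype.card V := by
  rw [← Set.ncard_union_eq disjoint_sdiff_right (Set.toFinite _) (Set.toFinite _),
    Set.union_diff_cancel (Set.subset_univ s), Set.ncard_univ, Nat.card_eq_fintype_card]

theorem stmt5 [Fintype V] (G : SimpleGraph V) (n k : ℕ) (hn : Fintype.card V = n)
    (hk : 1 ≤ k) (hkn : k ≤ n) :
    EveryKIdentifying G k ↔
      ((∀ x : V, n - k ≤ (G.neighborSet x).ncard) ∧
        ∀ x y : V, x ≠ y →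
          (closedNbhd G x ∩ closedNbhd G y).ncard +
            (Set.univ \ (closedNbhd G x ∪ closedNbhd G y)).ncard ≤ k - 1) := by
  constructor
  · intro h
    constructor
    · intro x
      by_contra hlt
      push_neg at hlt
      have hcompl : k ≤ (Set.univ \ closedNbhd G x).ncard := by
        have := compl_ncard (closedNbhd G x)
        rw [closedNbhd_ncard, hn] at this
        omega
      obtain ⟨C, hCsub, hCcard⟩ := Set.exists_subset_card_eq hcompl
      obtain ⟨z, hz⟩ := (h C hCcard).1 x
      exact (hCsub hz.2).2 hz.1
    · intro x y hxy
      by_contra hge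
      push_neg at hge
      set S := (closedNbhd G x ∩ closedNbhd G y) ∪
        (Set.univ \ (closedNbhd G x ∪ closedNbhd G y)) with hS
      have hdisj : Disjoint (closedNbhd G x ∩ closedNbhd G y)
          (Set.univ \ (closedNbhd G x ∪ closedNbhd G y)) := by
        rw [Set.disjoint_left]
        intro a ha hb
        exact hb.2 (Set.mem_union_left _ ha.1)
      have hScard : k ≤ S.ncard := by
        rw [hS, Set.ncard_union_eq hdisj (Set.toFinite _) (Set.toFinite _)]
        omega
      obtain ⟨C, hCsub, hCcard⟩ := Set.exists_subset_card_eq hScard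
      apply hxy
      apply (h C hCcard).2
      ext z
      constructor
      · rintro ⟨hzx, hzC⟩
        refine ⟨?_, hzC⟩
        rcases hCsub hzC with h1 | h1
        · exact h1.2
        · exact absurd (Set.mem_union_left _ hzx) h1.2
      · rintro ⟨hzy, hzC⟩
        refine ⟨?_, hzC⟩
        rcases hCsub hzC with h1 | h1
        · exact h1.1
        · exact absurd (Set.mem_union_right _ hzy) h1.2
  · rintro ⟨h1, h2⟩ C hC
    constructor
    · intro x
      rw [Set.nonempty_iff_ne_empty]
      intro hempty
      have hCsub : C ⊆ Set.univ \ closedNbhd G x := by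
        intro z hz
        refine ⟨trivial, fun hzx => ?_⟩
        exact Set.eq_empty_iff_forall_notMem.mp hempty z ⟨hzx, hz⟩
      have hle : k ≤ (Set.univ \ closedNbhd G x).ncard := by
        rw [← hC]; exact Set.ncard_le_ncard hCsub (Set.toFinite _)
      have h3 := compl_ncard (closedNbhd G x)
      rw [closedNbhd_ncard, hn] at h3
      have := h1 x
      omega
    · intro x y heq
      by_contra hxy
      have hsum := h2 x y hxy
      have hCsub : C ⊆ (closedNbhd G x ∩ closedNbhd G y) ∪
          (Set.univ \ (closedNbhd G x ∪ closedNbhd G y)) := by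
        intro z hz
        by_cases hzx : z ∈ closedNbhd G x
        · have : z ∈ closedNbhd G y ∩ C := heq ▸ ⟨hzx, hz⟩
          exact Set.mem_union_left _ ⟨hzx, this.1⟩
        · by_cases hzy : z ∈ closedNbhd G y
          · have : z ∈ closedNbhd G x ∩ C := heq ▸ ⟨hzy, hz⟩
            exact absurd this.1 hzx
          · exact Set.mem_union_right _ ⟨trivial, fun h => h.elim hzx hzy⟩
      have hdisj : Disjoint (closedNbhd G x ∩ closedNbhd G y)
          (Set.univ \ (closedNbhd G x ∪ closedNbhd G y)) := by
        rw [Set.disjoint_left]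
        intro a ha hb
        exact hb.2 (Set.mem_union_left _ ha.1)
      have hle : k ≤ _ := hC ▸ Set.ncard_le_ncard hCsub (Set.toFinite _)
      rw [Set.ncard_union_eq hdisj (Set.toFinite _) (Set.toFinite _)] at hle
      omega
end

section
/- Let G_0 be a graph on n_0 vertices such that every k_0-subset of vertices is identifying, and suppose |N[x]| ≤ k_0 − 1 for every vertex x of G_0 (equivalently, the maximum degree of G_0 is at most k_0 − 2). Let G be obtained from G_0 by adding one new vertex adjacent to all vertices of G_0. Then every (k_0+1)-subset of vertices of G is an identifying set in G. -/
open Set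

variable {V : Type*}

/-- Add a new vertex (`none`) adjacent to all old vertices. -/
def addDominatingVertex (G : SimpleGraph V) : SimpleGraph (Option V) where
  Adj x y :=
    match x, y with
    | none, none => False
    | none, some _ => True
    | some _, none => True
    | some a, some b => G.Adj a b
  symm := by
    constructor
    rintro (_ | a) (_ | b) h <;> simp_all
    exact h.symm
  loopless := by
    constructor
    rintro (_ | a) h <;> simp_all

/-! A `(k₀ + 1)`-set `C` of `G` contains at least `k₀` old vertices, any `k₀` of which identify
`G₀`; as supersets of identifying sets are identifying, the old vertices of `C` dominate and separate
the old vertices of `G`. The new vertex sees all of `C`, whereas an old vertex `x` sees at most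
`|N[x]| ≤ k₀ - 1` old vertices of `C`, so it is separated from the new one. -/

namespace IsIdentifying

variable {G : SimpleGraph V} {C D : Set V}

theorem mono (hD : IsIdentifying G D) (hDC : D ⊆ C) : IsIdentifying G C := by
  refine ⟨fun x ↦ (hD.1 x).mono (inter_subset_inter_right _ hDC), fun x y hxy ↦ hD.2 x y ?_⟩
  rw [← inter_eq_right.2 hDC, ← inter_assoc, hxy, inter_assoc]

end IsIdentifying

section addDominatingVertex

variable {G : SimpleGraph V}

theorem closedNbhd_addDominatingVertex_none :
    closedNbhd (addDominatingVertex G) none = univ := by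
  ext (_ | v) <;> simp [closedNbhd, SimpleGraph.neighborSet, addDominatingVertex]

theorem preimage_some_closedNbhd_addDominatingVertex (a : V) :
    some ⁻¹' closedNbhd (addDominatingVertex G) (some a) = closedNbhd G a := by
  ext v
  simp [closedNbhd, SimpleGraph.neighborSet, addDominatingVertex]

theorem preimage_some_subset_of_closedNbhd_inter_eq {C : Set (Option V)} {a : V}
    (h : closedNbhd (addDominatingVertex G) (some a) ∩ C =
      closedNbhd (addDominatingVertex G) none ∩ C) :
    some ⁻¹' C ⊆ closedNbhd G a := by
  rw [closedNbhd_addDominatingVertex_none, univ_inter] at h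
  rw [← preimage_some_closedNbhd_addDominatingVertex (G := G)]
  exact preimage_mono (h ▸ inter_subset_left)

theorem isIdentifying_addDominatingVertex {C : Set (Option V)}
    (hC : IsIdentifying G (some ⁻¹' C)) (hne : C.Nonempty)
    (hsep : ∀ a, ¬ some ⁻¹' C ⊆ closedNbhd G a) :
    IsIdentifying (addDominatingVertex G) C := by
  have preimage_some_inter (a : V) :
      some ⁻¹' (closedNbhd (addDominatingVertex G) (some a) ∩ C) =
        closedNbhd G a ∩ some ⁻¹' C := by
    rw [preimage_inter, preimage_some_closedNbhd_addDominatingVertex]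
  refine ⟨?_, ?_⟩
  · rintro (_ | a)
    · rwa [closedNbhd_addDominatingVertex_none, univ_inter]
    · obtain ⟨v, hv⟩ := hC.1 a
      exact ⟨some v, by rwa [← preimage_some_inter] at hv⟩
  · rintro (_ | a) (_ | b) hab
    · rfl
    · exact (hsep b (preimage_some_subset_of_closedNbhd_inter_eq hab.symm)).elim
    · exact (hsep a (preimage_some_subset_of_closedNbhd_inter_eq hab)).elim
    · exact congrArg some (hC.2 a b (by rw [← preimage_some_inter, hab, preimage_some_inter]))

end addDominatingVertex

theorem ncard_le_ncard_preimage_some_add_one [Finite V] (C : Set (Option V)) :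
    C.ncard ≤ (some ⁻¹' C).ncard + 1 := by
  have hC : C ⊆ insert none (some '' (some ⁻¹' C)) := by
    rintro (_ | v) hv
    · exact mem_insert _ _
    · exact mem_insert_of_mem _ ⟨v, hv, rfl⟩
  calc C.ncard ≤ (insert none (some '' (some ⁻¹' C))).ncard := ncard_le_ncard hC
    _ ≤ (some '' (some ⁻¹' C)).ncard + 1 := ncard_insert_le _ _
    _ = (some ⁻¹' C).ncard + 1 := by rw [ncard_image_of_injective _ (Option.some_injective V)]

theorem stmt7 [Fintype V] (G₀ : SimpleGraph V) (k₀ : ℕ)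
    (h : EveryKIdentifying G₀ k₀)
    (hdeg : ∀ x : V, (closedNbhd G₀ x).ncard ≤ k₀ - 1) :
    EveryKIdentifying (addDominatingVertex G₀) (k₀ + 1) := by
  intro C hC
  have hold : k₀ ≤ (some ⁻¹' C).ncard := by
    have := ncard_le_ncard_preimage_some_add_one C
    omega
  obtain ⟨D, hDC, hD⟩ := exists_subset_card_eq hold
  refine isIdentifying_addDominatingVertex ((h D hD).mono hDC)
    (nonempty_of_ncard_ne_zero (by omega)) fun a ha ↦ ?_
  have hpos : 0 < (closedNbhd G₀ a).ncard := (ncard_pos).2 ⟨a, mem_insert a _⟩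
  have := ncard_le_ncard ha
  have := hdeg a
  omega
end

section
/- If k ≥ 2 and G is a graph on n vertices such that every k-subset of vertices is an identifying set, then n ≤ 3k − 3. -/
open Set

variable {V : Type*}

lemma key_lemma [Fintype V] (k : ℕ) (S : Set V)
    (hS : ∀ C : Set V, C.ncard = k → (S ∩ C).Nonempty) :
    Fintype.card V ≤ S.ncard + (k - 1) := by
  by_contra hlt
  push_neg at hlt
  have hcompl : S.ncard + Sᶜ.ncard = Fintype.card V := by
    rw [Set.ncard_add_ncard_compl S, Nat.card_eq_fintype_card]
  have hk : k ≤ Sᶜ.ncard := by omega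
  obtain ⟨C, hCsub, hCcard⟩ := Set.exists_subset_card_eq hk
  obtain ⟨c, hcS, hcC⟩ := hS C hCcard
  exact (hCsub hcC) hcS

theorem stmt8 [Fintype V] (G : SimpleGraph V) (k : ℕ) (hk : 2 ≤ k)
    (hkn : k ≤ Fintype.card V) (h : EveryKIdentifying G k) :
    Fintype.card V ≤ 3 * k - 3 := by
  obtain ⟨x, y, hxy⟩ := Fintype.exists_pair_of_one_lt_card (α := V) (by omega)
  set Nx := closedNbhd G x with hNx
  set Ny := closedNbhd G y with hNy
  -- nonempty intersections give large neighbourhoods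
  have hx : Fintype.card V ≤ Nx.ncard + (k - 1) :=
    key_lemma k Nx (fun C hC => (h C hC).1 x)
  have hy : Fintype.card V ≤ Ny.ncard + (k - 1) :=
    key_lemma k Ny (fun C hC => (h C hC).1 y)
  -- symmetric difference intersects every k-set
  have hd : Fintype.card V ≤ ((Nx \ Ny) ∪ (Ny \ Nx)).ncard + (k - 1) := by
    apply key_lemma
    intro C hC
    by_contra hne
    rw [Set.not_nonempty_iff_eq_empty] at hne
    apply hxy
    apply (h C hC).2 x y
    ext c
    simp only [Set.mem_inter_iff]
    constructor
    · rintro ⟨hcx, hcC⟩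
      refine ⟨?_, hcC⟩
      by_contra hcy
      exact absurd hne (Set.nonempty_iff_ne_empty.mp ⟨c, Or.inl ⟨hcx, hcy⟩, hcC⟩)
    · rintro ⟨hcy, hcC⟩
      refine ⟨?_, hcC⟩
      by_contra hcx
      exact absurd hne (Set.nonempty_iff_ne_empty.mp ⟨c, Or.inr ⟨hcy, hcx⟩, hcC⟩)
  -- cardinal arithmetic
  have hdu : ((Nx \ Ny) ∪ (Ny \ Nx)).ncard = (Nx \ Ny).ncard + (Ny \ Nx).ncard :=
    Set.ncard_union_eq (disjoint_sdiff_sdiff)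
  have ha : (Nx ∩ Ny).ncard + (Nx \ Ny).ncard = Nx.ncard :=
    Set.ncard_inter_add_ncard_diff_eq_ncard Nx Ny
  have hb : (Ny ∩ Nx).ncard + (Ny \ Nx).ncard = Ny.ncard :=
    Set.ncard_inter_add_ncard_diff_eq_ncard Ny Nx
  have hcomm : (Ny ∩ Nx).ncard = (Nx ∩ Ny).ncard := by rw [Set.inter_comm]
  have hu : (Nx \ Ny).ncard + (Ny \ Nx).ncard + (Nx ∩ Ny).ncard ≤ Fintype.card V := by
    have : ((Nx \ Ny) ∪ (Ny \ Nx) ∪ (Nx ∩ Ny)).ncard ≤ Fintype.card V := by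
      rw [← Nat.card_eq_fintype_card, ← Set.ncard_univ V]
      exact Set.ncard_le_ncard (Set.subset_univ _)
    calc (Nx \ Ny).ncard + (Ny \ Nx).ncard + (Nx ∩ Ny).ncard
        = ((Nx \ Ny) ∪ (Ny \ Nx) ∪ (Nx ∩ Ny)).ncard := by
          rw [Set.ncard_union_eq (by
            simp only [Set.disjoint_union_left]
            exact ⟨Disjoint.mono_right Set.inter_subset_right disjoint_sdiff_left,
              Disjoint.mono_right Set.inter_subset_left disjoint_sdiff_left⟩), hdu]
      _ ≤ Fintype.card V := this
  omega
end

section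
/- If k ≥ 2 and G is a graph on n vertices such that every k-subset of vertices is an identifying set, then n ≤ 2k − 2. -/
open Set

variable {V : Type*}

open scoped Classical

/-- Closed neighbourhood as a `Finset`. -/
noncomputable def Nf [Fintype V] (G : SimpleGraph V) (x : V) : Finset V :=
  Finset.univ.filter (fun z => z ∈ closedNbhd G x)

lemma mem_Nf [Fintype V] (G : SimpleGraph V) {x z : V} :
    z ∈ Nf G x ↔ z ∈ closedNbhd G x := by simp [Nf]

lemma Nf_comm [Fintype V] (G : SimpleGraph V) (x z : V) :
    z ∈ Nf G x ↔ x ∈ Nf G z := by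
  simp only [mem_Nf, closedNbhd, Set.mem_insert_iff, SimpleGraph.mem_neighborSet]
  constructor
  · rintro (rfl | hadj)
    · exact Or.inl rfl
    · exact Or.inr hadj.symm
  · rintro (rfl | hadj)
    · exact Or.inl rfl
    · exact Or.inr hadj.symm

lemma sum_ind [Fintype V] (s : Finset V) :
    ∑ x : V, (if x ∈ s then (1 : ℕ) else 0) = s.card := by
  rw [Finset.sum_ite_mem, Finset.univ_inter, Finset.sum_const, smul_eq_mul, mul_one]

lemma sum_ind' [Fintype V] (s : Finset V) :
    ∑ x : V, (if x ∈ s then (0 : ℕ) else 1) = Fintype.card V - s.card := by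
  have e : ∀ x : V, (if x ∈ s then (0 : ℕ) else 1) = (if x ∈ sᶜ then (1 : ℕ) else 0) := by
    intro x; by_cases hx : x ∈ s <;> simp [hx]
  rw [Finset.sum_congr rfl fun x _ => e x, sum_ind, Finset.card_compl]

lemma sum_sdiff_card [Fintype V] (N : V → Finset V)
    (hsymm : ∀ x z : V, z ∈ N x ↔ x ∈ N z) :
    ∑ x : V, ∑ y : V, (N x \ N y).card
      = ∑ z : V, (N z).card * (Fintype.card V - (N z).card) := by
  have key : ∀ x y : V, (N x \ N y).card
      = ∑ z : V, (if z ∈ N x then (1:ℕ) else 0) * (if z ∈ N y then (0:ℕ) else 1) := by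
    intro x y
    have h1 : N x \ N y = Finset.univ.filter (fun z => z ∈ N x \ N y) := by
      ext z; simp
    rw [h1, Finset.card_filter]
    refine Finset.sum_congr rfl fun z _ => ?_
    by_cases h2 : z ∈ N x <;> by_cases h3 : z ∈ N y <;> simp [h2, h3, Finset.mem_sdiff]
  calc ∑ x : V, ∑ y : V, (N x \ N y).card
      = ∑ x : V, ∑ y : V, ∑ z : V,
          (if z ∈ N x then (1:ℕ) else 0) * (if z ∈ N y then (0:ℕ) else 1) := by
        exact Finset.sum_congr rfl fun x _ => Finset.sum_congr rfl fun y _ => key x y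
    _ = ∑ x : V, ∑ z : V, ∑ y : V,
          (if z ∈ N x then (1:ℕ) else 0) * (if z ∈ N y then (0:ℕ) else 1) := by
        exact Finset.sum_congr rfl fun x _ => Finset.sum_comm
    _ = ∑ z : V, ∑ x : V, ∑ y : V,
          (if z ∈ N x then (1:ℕ) else 0) * (if z ∈ N y then (0:ℕ) else 1) :=
        Finset.sum_comm
    _ = ∑ z : V, (∑ x : V, (if z ∈ N x then (1:ℕ) else 0)) *
          (∑ y : V, (if z ∈ N y then (0:ℕ) else 1)) := by
        exact Finset.sum_congr rfl fun z _ => (Finset.sum_mul_sum _ _ _ _).symm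
    _ = ∑ z : V, (N z).card * (Fintype.card V - (N z).card) := by
        refine Finset.sum_congr rfl fun z _ => ?_
        congr 1
        · rw [Finset.sum_congr rfl fun x _ => if_congr (hsymm x z) rfl rfl, sum_ind]
        · rw [Finset.sum_congr rfl fun y _ => if_congr (hsymm y z) rfl rfl, sum_ind']
theorem stmt9 [Fintype V] (G : SimpleGraph V) (k : ℕ) (hk : 2 ≤ k)
    (hkn : k ≤ Fintype.card V) (h : EveryKIdentifying G k) :
    Fintype.card V ≤ 2 * k - 2 := by
  by_contra hcon
  set n := Fintype.card V with hn
  have hn2k : 2 * k - 1 ≤ n := by omega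
  set d := n + 1 - k with hdd
  have hd : d + k = n + 1 := by omega
  have hdk : k ≤ d := by omega
  set m : V → ℕ := fun z => (Nf G z).card with hm
  have hmn : ∀ z : V, m z ≤ n := fun z => by
    simpa [hm, hn] using Finset.card_le_univ (Nf G z)
  -- extraction of avoiding sets
  have hC : ∀ T : Finset V, T.card + k ≤ n →
      ∃ C : Finset V, C.card = k ∧ ∀ z ∈ C, z ∉ T := by
    intro T hT
    obtain ⟨C, hsub, hcard⟩ := Finset.exists_subset_card_eq
      (s := Tᶜ) (n := k) (by rw [Finset.card_compl]; omega)
    exact ⟨C, hcard, fun z hz => Finset.mem_compl.mp (hsub hz)⟩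
  -- F1 : every closed neighbourhood is large
  have F1 : ∀ x : V, d ≤ m x := by
    intro x
    by_contra hlt
    obtain ⟨C, hcard, hdisj⟩ := hC (Nf G x) (by simp only [hm] at hlt; omega)
    obtain ⟨z, hz⟩ := (h ↑C (by simp [Set.ncard_coe_finset, hcard])).1 x
    exact hdisj z hz.2 ((mem_Nf G).mpr hz.1)
  -- the symmetric-difference counter
  set cD : V → V → ℕ :=
    fun x y => ((Nf G x \ Nf G y) ∪ (Nf G y \ Nf G x)).card with hcDdef
  have hcD : ∀ x y : V, cD x y = (Nf G x \ Nf G y).card + (Nf G y \ Nf G x).card := by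
    intro x y
    exact Finset.card_union_of_disjoint disjoint_sdiff_sdiff
  -- F3 : every pair is distinguished by many vertices
  have F3 : ∀ x y : V, x ≠ y → d ≤ cD x y := by
    intro x y hxy
    by_contra hlt
    obtain ⟨C, hcard, hdisj⟩ := hC ((Nf G x \ Nf G y) ∪ (Nf G y \ Nf G x))
      (by simp only [hcDdef] at hlt; omega)
    apply hxy
    apply (h ↑C (by simp [Set.ncard_coe_finset, hcard])).2
    have hiff : ∀ z ∈ C, (z ∈ closedNbhd G x ↔ z ∈ closedNbhd G y) := by
      intro z hz
      have hz2 := hdisj z hz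
      simp only [Finset.mem_union, Finset.mem_sdiff, not_or, not_and, not_not] at hz2
      rw [← mem_Nf G (x := x), ← mem_Nf G (x := y)]
      exact ⟨fun h1 => hz2.1 h1, fun h1 => hz2.2 h1⟩
    ext z
    simp only [Set.mem_inter_iff, Finset.mem_coe]
    constructor
    · rintro ⟨h1, h2⟩; exact ⟨(hiff z h2).mp h1, h2⟩
    · rintro ⟨h1, h2⟩; exact ⟨(hiff z h2).mpr h1, h2⟩
  -- the main counting identity
  have Tid : ∑ x : V, ∑ y : V, (Nf G x \ Nf G y).card = ∑ z : V, m z * (n - m z) :=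
    sum_sdiff_card (Nf G) (Nf_comm G)
  have hE : ∑ x : V, ∑ y : V, cD x y = 2 * ∑ z : V, m z * (n - m z) := by
    calc ∑ x : V, ∑ y : V, cD x y
        = ∑ x : V, ∑ y : V, ((Nf G x \ Nf G y).card + (Nf G y \ Nf G x).card) :=
          Finset.sum_congr rfl fun x _ => Finset.sum_congr rfl fun y _ => hcD x y
      _ = (∑ x : V, ∑ y : V, (Nf G x \ Nf G y).card)
            + ∑ x : V, ∑ y : V, (Nf G y \ Nf G x).card := by
          simp [Finset.sum_add_distrib]
      _ = (∑ x : V, ∑ y : V, (Nf G x \ Nf G y).card)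
            + ∑ y : V, ∑ x : V, (Nf G y \ Nf G x).card := by rw [Finset.sum_comm]
      _ = 2 * ∑ z : V, m z * (n - m z) := by rw [Tid]; ring
  -- lower bound via off-diagonal pairs
  have hlow2 : (n * n - n) * d ≤ ∑ p ∈ Finset.univ.offDiag, cD p.1 p.2 := by
    have := Finset.card_nsmul_le_sum Finset.univ.offDiag (fun p => cD p.1 p.2) d
      (fun p hp => F3 p.1 p.2 (Finset.mem_offDiag.mp hp).2.2)
    simpa [Finset.offDiag_card, Finset.card_univ, smul_eq_mul, hn] using this
  have hoffle : ∑ p ∈ Finset.univ.offDiag, cD p.1 p.2 ≤ ∑ x : V, ∑ y : V, cD x y := by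
    rw [← Finset.sum_product' (s := (Finset.univ : Finset V)) (t := Finset.univ)
      (f := fun x y => cD x y)]
    apply Finset.sum_le_sum_of_subset
    intro p hp
    simp [Finset.mem_product]
  -- pointwise upper bound
  have hup : ∀ z : V, m z * (n - m z) ≤ d * (k - 1) := by
    intro z
    have h1 : d ≤ m z := F1 z
    have h2 : m z ≤ n := hmn z
    have hj : m z + (n - m z) = n := by omega
    have he : d + (k - 1) = n := by omega
    have hjk : n - m z ≤ k - 1 := by omega
    have hdj : n - m z ≤ d := by omega
    set a := m z
    set b := n - a
    set e := k - 1
    -- a*b ≤ d*e given a+b = n = d+e, d ≤ a, b ≤ e, b ≤ d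
    zify at *
    nlinarith [mul_nonneg (by linarith : (0:ℤ) ≤ (a:ℤ) - d) (by linarith : (0:ℤ) ≤ (d:ℤ) - b)]
  -- conclude n = 2k-1, d = k
  have hchain : (n * n - n) * d ≤ 2 * (n * (d * (k - 1))) := by
    calc (n * n - n) * d ≤ ∑ p ∈ Finset.univ.offDiag, cD p.1 p.2 := hlow2
      _ ≤ ∑ x : V, ∑ y : V, cD x y := hoffle
      _ = 2 * ∑ z : V, m z * (n - m z) := hE
      _ ≤ 2 * (n * (d * (k - 1))) := by
          have := Finset.sum_le_sum (s := Finset.univ) (fun z _ => hup z)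
          have h2 : ∑ z : V, m z * (n - m z) ≤ n * (d * (k-1)) := by
            simpa [Finset.sum_const, Finset.card_univ, smul_eq_mul, hn] using this
          omega
  have hneq1 : n = 2 * k - 1 := by
    have e1 : n * n - n = n * (n - 1) := by
      cases n with
      | zero => simp
      | succ p => rw [Nat.succ_sub_one, Nat.mul_succ, Nat.add_sub_cancel]
    have h1 : n * ((n - 1) * d) ≤ n * (2 * (d * (k - 1))) := by
      calc n * ((n - 1) * d) = (n * (n - 1)) * d := by ring
        _ = (n * n - n) * d := by rw [e1]
        _ ≤ 2 * (n * (d * (k - 1))) := hchain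
        _ = n * (2 * (d * (k - 1))) := by ring
    have h2 : (n - 1) * d ≤ 2 * (d * (k - 1)) := Nat.le_of_mul_le_mul_left h1 (by omega)
    have h3 : d * (n - 1) ≤ d * (2 * (k - 1)) := by
      calc d * (n - 1) = (n - 1) * d := by ring
        _ ≤ 2 * (d * (k - 1)) := h2
        _ = d * (2 * (k - 1)) := by ring
    have h4 : n - 1 ≤ 2 * (k - 1) := Nat.le_of_mul_le_mul_left h3 (by omega)
    omega
  have hneq2 : d = k := by omega
  -- equality throughout
  have e1 : n * n - n = n * (n - 1) := by
    cases n with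
    | zero => simp
    | succ p => rw [Nat.succ_sub_one, Nat.mul_succ, Nat.add_sub_cancel]
  have htot : (n * n - n) * k = 2 * (n * (k * (k - 1))) := by
    have e2 : n - 1 = 2 * (k - 1) := by omega
    rw [e1, e2]; ring
  have hup' : ∀ z : V, m z * (n - m z) ≤ k * (k - 1) := by
    intro z; have := hup z; rw [hneq2] at this; exact this
  have hEqSum : ∑ z : V, m z * (n - m z) = n * (k * (k - 1)) := by
    apply le_antisymm
    · have := Finset.sum_le_sum (s := Finset.univ) (fun z _ => hup' z)
      simpa [Finset.sum_const, Finset.card_univ, smul_eq_mul, hn] using this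
    · have h1 : (n * n - n) * d ≤ 2 * ∑ z : V, m z * (n - m z) := by
        calc (n * n - n) * d ≤ ∑ p ∈ Finset.univ.offDiag, cD p.1 p.2 := hlow2
          _ ≤ ∑ x : V, ∑ y : V, cD x y := hoffle
          _ = 2 * ∑ z : V, m z * (n - m z) := hE
      rw [hneq2, htot] at h1
      omega
  -- every closed neighbourhood has size exactly k
  have hmz : ∀ z : V, m z = k := by
    have hall : ∀ z : V, m z * (n - m z) = k * (k - 1) := by
      intro z
      by_contra hne
      have hlt : m z * (n - m z) < k * (k - 1) := lt_of_le_of_ne (hup' z) hne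
      have hs : ∑ z : V, m z * (n - m z) < ∑ _z : V, k * (k - 1) :=
        Finset.sum_lt_sum (fun i _ => hup' i) ⟨z, Finset.mem_univ z, hlt⟩
      rw [hEqSum] at hs
      simp only [Finset.sum_const, Finset.card_univ, smul_eq_mul, ← hn] at hs
      omega
    intro z
    have hfz := hall z
    have h1 : k ≤ m z := hneq2 ▸ F1 z
    have h2 : m z ≤ n := hmn z
    have hfac : ((m z : ℤ) - k) * ((m z : ℤ) - ((k : ℤ) - 1)) = 0 := by
      have hc : (m z : ℤ) * ((n : ℤ) - (m z : ℤ)) = (k : ℤ) * ((k : ℤ) - 1) := by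
        have := congrArg (fun t : ℕ => (t : ℤ)) hfz
        push_cast [Nat.cast_sub h2, Nat.cast_sub (by omega : 1 ≤ k)] at this
        exact this
      have hn' : (n : ℤ) = 2 * (k : ℤ) - 1 := by omega
      linear_combination (-1 : ℤ) * hc + (m z : ℤ) * hn'
    rcases mul_eq_zero.mp hfac with h0 | h0
    · omega
    · omega
  -- handshake: sum of degrees is even
  have hdeg : ∀ z : V, m z = G.degree z + 1 := by
    intro z
    have hNf : Nf G z = insert z (G.neighborFinset z) := by
      ext w
      simp [mem_Nf, closedNbhd, SimpleGraph.mem_neighborFinset]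
    simp only [hm, hNf]
    rw [Finset.card_insert_of_notMem (by simp)]
    rfl
  have hsumk : ∑ z : V, m z = n * k := by
    simp only [hmz]
    simp [Finset.sum_const, Finset.card_univ, ← hn, mul_comm]
  have heven : ∑ z : V, G.degree z = 2 * G.edgeFinset.card :=
    SimpleGraph.sum_degrees_eq_twice_card_edges G
  have hdsum : ∑ z : V, (G.degree z + 1) = n * k := by
    rw [← hsumk]; exact Finset.sum_congr rfl fun z _ => (hdeg z).symm
  have hdsum2 : (∑ z : V, G.degree z) + n = n * k := by
    rw [← hdsum, Finset.sum_add_distrib]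
    simp [Finset.card_univ, ← hn]
  -- so n*(k-1) = 2 * #edges, with n odd, hence k is odd
  have hpar : n * (k - 1) = 2 * G.edgeFinset.card := by
    rw [← heven]
    have : n * (k - 1) = n * k - n := by
      rw [Nat.mul_sub, mul_one]
    omega
  have hkodd : ∃ r, k = 2 * r + 1 := by
    rcases Nat.even_mul.mp (⟨G.edgeFinset.card, by omega⟩ : Even (n * (k - 1))) with he | he
    · obtain ⟨r, hr⟩ := he; omega
    · obtain ⟨r, hr⟩ := he; exact ⟨r, by omega⟩
  -- pick a pair of distinct vertices
  obtain ⟨x, y, hxy⟩ := Fintype.exists_pair_of_one_lt_card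
    (by rw [← hn]; omega : 1 < Fintype.card V)
  -- all off-diagonal symmetric differences have size exactly k
  have hsum_off : ∑ p ∈ Finset.univ.offDiag, cD p.1 p.2 = (n * n - n) * k := by
    apply le_antisymm
    · calc ∑ p ∈ Finset.univ.offDiag, cD p.1 p.2
          ≤ ∑ x : V, ∑ y : V, cD x y := hoffle
        _ = 2 * ∑ z : V, m z * (n - m z) := hE
        _ = (n * n - n) * k := by rw [hEqSum, htot]
    · rw [← hneq2]; exact hlow2
  have hpk : cD x y = k := by
    by_contra hne
    have hlt : k < cD x y := lt_of_le_of_ne (hneq2 ▸ F3 x y hxy) (Ne.symm hne)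
    have hs : ∑ _p ∈ Finset.univ.offDiag, k < ∑ p ∈ Finset.univ.offDiag, cD p.1 p.2 :=
      Finset.sum_lt_sum (fun p hp => hneq2 ▸ F3 p.1 p.2 (Finset.mem_offDiag.mp hp).2.2)
        ⟨(x, y), Finset.mem_offDiag.mpr ⟨Finset.mem_univ x, Finset.mem_univ y, hxy⟩, hlt⟩
    rw [hsum_off, Finset.sum_const, Finset.offDiag_card, Finset.card_univ, ← hn,
      smul_eq_mul] at hs
    omega
  -- parity contradiction
  have e2 : (Nf G x \ Nf G y).card + (Nf G x ∩ Nf G y).card = m x :=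
    Finset.card_sdiff_add_card_inter _ _
  have e3 : (Nf G y \ Nf G x).card + (Nf G x ∩ Nf G y).card = m y := by
    rw [Finset.inter_comm]; exact Finset.card_sdiff_add_card_inter _ _
  have e4 := hcD x y
  have e5 := hmz x
  have e6 := hmz y
  obtain ⟨r, hr⟩ := hkodd
  omega
end

section
/- If k ≥ 6 and G is a triangle-free graph on n vertices such that every k-subset of vertices is an identifying set, then n ≤ 2k − 3. -/
open Set

variable {V : Type*}

lemma card_symmDiff_eq {V : Type*} [DecidableEq V] (s t : Finset V) :
    (symmDiff s t).card + 2 * (s ∩ t).card = s.card + t.card := by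
  rw [symmDiff_def, Finset.sup_eq_union]
  have h1 : (s \ t) ∪ (t \ s) = (s ∪ t) \ (s ∩ t) := by
    ext a; simp [Finset.mem_union, Finset.mem_sdiff]; tauto
  rw [h1, Finset.card_sdiff_of_subset (by exact Finset.inter_subset_union)]
  have h2 := Finset.card_union_add_card_inter s t
  have h3 := Finset.card_le_card (Finset.inter_subset_union (s := s) (t := t))
  omega

lemma card_coe_subset_sum {V : Type*} [DecidableEq V] (s W : Finset V) (hs : s ⊆ W) :
    (s.card : ℤ) = ∑ i ∈ W, (if i ∈ s then (1:ℤ) else 0) := by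
  rw [← Finset.sum_filter, Finset.sum_const, Finset.filter_mem_eq_inter,
    Finset.inter_eq_right.mpr hs]
  simp

lemma plotkin {V : Type*} [DecidableEq V] (N W : Finset V) (A : V → Finset V)
    (hA : ∀ u ∈ N, A u ⊆ W) (s : ℕ)
    (hd : ∀ u ∈ N, ∀ v ∈ N, u ≠ v → (s : ℤ) ≤ ((symmDiff (A u) (A v)).card : ℤ)) :
    2 * ((N.card : ℤ) * ((N.card : ℤ) - 1) * s) ≤ (W.card : ℤ) * (N.card : ℤ)^2 := by
  set d : ℤ := (N.card : ℤ) with hdd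
  set S : ℤ := ∑ u ∈ N, ∑ v ∈ N, ((symmDiff (A u) (A v)).card : ℤ) with hS
  have hlow : d * (d - 1) * s ≤ S := by
    rw [hS]
    have key : ∀ u ∈ N, (d - 1) * s ≤ ∑ v ∈ N, ((symmDiff (A u) (A v)).card : ℤ) := by
      intro u hu
      have h1 : ∑ v ∈ N.erase u, (s : ℤ) ≤ ∑ v ∈ N.erase u, ((symmDiff (A u) (A v)).card : ℤ) := by
        apply Finset.sum_le_sum
        intro v hv
        exact hd u hu v (Finset.mem_of_mem_erase hv) (fun he => (Finset.ne_of_mem_erase hv) he.symm)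
      have h2 : ∑ v ∈ N.erase u, ((symmDiff (A u) (A v)).card : ℤ) ≤
          ∑ v ∈ N, ((symmDiff (A u) (A v)).card : ℤ) := by
        apply Finset.sum_le_sum_of_subset_of_nonneg (Finset.erase_subset u N)
        intro v _ _; positivity
      have h3 : ∑ v ∈ N.erase u, (s : ℤ) = (d - 1) * s := by
        rw [Finset.sum_const, Finset.card_erase_of_mem hu, nsmul_eq_mul,
          Nat.cast_sub (Nat.one_le_iff_ne_zero.mpr (Finset.card_ne_zero_of_mem hu))]
        push_cast; ring
      linarith
    calc d * (d-1) * s = ∑ _u ∈ N, ((d-1) * (s:ℤ)) := by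
          rw [Finset.sum_const, nsmul_eq_mul]; ring
    _ ≤ _ := Finset.sum_le_sum key
  have hup : 2 * S ≤ (W.card : ℤ) * d^2 := by
    have step1 : S = ∑ u ∈ N, ∑ v ∈ N, ∑ i ∈ W, (if i ∈ symmDiff (A u) (A v) then (1:ℤ) else 0) :=
      Finset.sum_congr rfl (fun u hu => Finset.sum_congr rfl (fun v hv =>
        card_coe_subset_sum _ _ (fun i hi => by
          rcases Finset.mem_symmDiff.mp hi with ⟨h1, _⟩ | ⟨h1, _⟩
          · exact hA u hu h1
          · exact hA v hv h1)))
    have step2 : S = ∑ i ∈ W, ∑ u ∈ N, ∑ v ∈ N, (if i ∈ symmDiff (A u) (A v) then (1:ℤ) else 0) := by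
      rw [step1, Finset.sum_congr rfl (fun u _ => Finset.sum_comm (s := N) (t := W))]
      exact Finset.sum_comm
    have hbd : ∀ i ∈ W, 2 * (∑ u ∈ N, ∑ v ∈ N, (if i ∈ symmDiff (A u) (A v) then (1:ℤ) else 0))
        ≤ d^2 := by
      intro i _
      set f : V → ℤ := fun u => if i ∈ A u then (1:ℤ) else 0 with hf
      set T : ℤ := ∑ u ∈ N, f u with hT
      have pt : ∀ u v : V, (if i ∈ symmDiff (A u) (A v) then (1:ℤ) else 0)
          = f u + f v - 2 * (f u * f v) := by
        intro u v
        by_cases h1 : i ∈ A u <;> by_cases h2 : i ∈ A v <;>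
          simp [hf, Finset.mem_symmDiff, h1, h2]
      have inner : ∀ u : V, ∑ v ∈ N, (if i ∈ symmDiff (A u) (A v) then (1:ℤ) else 0)
          = d * f u + T - (2 * f u) * T := by
        intro u
        simp_rw [pt]
        rw [Finset.sum_sub_distrib, Finset.sum_add_distrib, Finset.sum_const, nsmul_eq_mul]
        have e1 : ∑ v ∈ N, 2 * (f u * f v) = (2 * f u) * T :=
          calc ∑ v ∈ N, 2 * (f u * f v) = ∑ v ∈ N, (2 * f u) * f v :=
                Finset.sum_congr rfl (fun v _ => by ring)
          _ = (2 * f u) * T := by rw [← Finset.mul_sum, ← hT]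
        have e2 : ∑ v ∈ N, f v = T := hT.symm
        rw [e1, e2]
      have outer : ∑ u ∈ N, ∑ v ∈ N, (if i ∈ symmDiff (A u) (A v) then (1:ℤ) else 0)
          = 2 * (d * T) - 2 * T^2 := by
        simp_rw [inner]
        rw [Finset.sum_sub_distrib, Finset.sum_add_distrib, Finset.sum_const, nsmul_eq_mul]
        have e1 : ∑ u ∈ N, (2 * f u) * T = 2 * T^2 :=
          calc ∑ u ∈ N, (2 * f u) * T = ∑ u ∈ N, (2 * T) * f u :=
                Finset.sum_congr rfl (fun u _ => by ring)
          _ = 2 * T^2 := by rw [← Finset.mul_sum, ← hT]; ring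
        have e2 : ∑ u ∈ N, d * f u = d * T := by rw [← Finset.mul_sum, ← hT]
        rw [e1, e2]
        ring
      rw [outer]
      nlinarith [sq_nonneg (d - 2*T)]
    calc 2 * S = ∑ i ∈ W, 2 * (∑ u ∈ N, ∑ v ∈ N, (if i ∈ symmDiff (A u) (A v) then (1:ℤ) else 0)) := by
          rw [step2, Finset.mul_sum]
    _ ≤ ∑ _i ∈ W, d^2 := Finset.sum_le_sum hbd
    _ = (W.card : ℤ) * d^2 := by rw [Finset.sum_const, nsmul_eq_mul]
  linarith

lemma numericZ (k n d : ℤ) (hk : 6 ≤ k) (hn : 2*k-2 ≤ n) (hnk : n ≤ k + d)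
    (hdk : d ≤ k) (hineq : 2*(d*(d-1)*(n-k-1)) ≤ (n-d-1)*d^2) :
    k = 6 ∧ n = 10 ∧ d = 4 := by
  have hcase : (n = 2*k-2 ∧ d = k-2) ∨ (n = 2*k-2 ∧ d = k-1) ∨ (n = 2*k-2 ∧ d = k) ∨
      (n = 2*k-1 ∧ d = k-1) ∨ (n = 2*k-1 ∧ d = k) ∨ (n = 2*k ∧ d = k) := by omega
  rcases hcase with ⟨h1,h2⟩|⟨h1,h2⟩|⟨h1,h2⟩|⟨h1,h2⟩|⟨h1,h2⟩|⟨h1,h2⟩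
  · have hk6 : k ≤ 6 := by
      by_contra hgt
      push_neg at hgt
      have h7 : 7 ≤ k := hgt
      have hpos : (0:ℤ) < k^2 - 9*k + 16 := by
        nlinarith [mul_nonneg (by linarith : (0:ℤ) ≤ k - 7) (by linarith : (0:ℤ) ≤ k - 2)]
      nlinarith [mul_pos (by linarith : (0:ℤ) < k - 2) hpos]
    omega
  · exfalso; nlinarith [mul_nonneg (by linarith : (0:ℤ) ≤ k - 2) (by linarith : (0:ℤ) ≤ k - 1)]
  · exfalso; nlinarith [mul_nonneg (by linarith : (0:ℤ) ≤ k - 3) (by linarith : (0:ℤ) ≤ k)]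
  · exfalso
    nlinarith [mul_nonneg (by linarith : (0:ℤ) ≤ k - 1)
      (by nlinarith [mul_nonneg (by linarith : (0:ℤ) ≤ k - 5) (by linarith : (0:ℤ) ≤ k - 1)] :
        (0:ℤ) ≤ k^2 - 6*k + 7)]
  · exfalso; nlinarith [mul_nonneg (by linarith : (0:ℤ) ≤ k - 2) (by linarith : (0:ℤ) ≤ k)]
  · exfalso; nlinarith [mul_nonneg (by linarith : (0:ℤ) ≤ k - 1) (by linarith : (0:ℤ) ≤ k)]

theorem stmt10 [Fintype V] (G : SimpleGraph V) (k : ℕ) (hk : 6 ≤ k)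
    (hkn : k ≤ Fintype.card V) (htf : G.CliqueFree 3)
    (h : EveryKIdentifying G k) :
    Fintype.card V ≤ 2 * k - 3 := by
  classical
  set n := Fintype.card V with hn
  by_contra hcon
  push_neg at hcon
  have hn2k : 2*k - 2 ≤ n := by omega
  -- finset closed neighbourhoods
  set cN : V → Finset V := fun x => insert x (G.neighborFinset x) with hcN
  have hcN_coe : ∀ x : V, closedNbhd G x = ↑(cN x) := by
    intro x
    simp [closedNbhd, hcN, SimpleGraph.neighborFinset_def, Set.coe_toFinset]
  have hcard_cN : ∀ x : V, (cN x).card = G.degree x + 1 := by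
    intro x
    rw [hcN]
    rw [Finset.card_insert_of_notMem (by simp)]
    rfl
  -- consequence 1 : degrees are large
  have I1 : ∀ x : V, n ≤ k + G.degree x := by
    intro x
    by_contra hc
    push_neg at hc
    have hbig : k ≤ (Finset.univ \ cN x).card := by
      rw [Finset.card_sdiff_of_subset (Finset.subset_univ _), Finset.card_univ, hcard_cN]
      omega
    obtain ⟨C, hCsub, hCcard⟩ := Finset.exists_subset_card_eq hbig
    obtain ⟨z, hz⟩ := (h ↑C (by rw [Set.ncard_coe_finset, hCcard])).1 x
    rw [Set.mem_inter_iff, hcN_coe] at hz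
    have hz2 := hCsub hz.2
    rw [Finset.mem_sdiff] at hz2
    exact hz2.2 hz.1
  -- consequence 2 : symmetric differences of closed nbhds are large
  have I2 : ∀ x y : V, x ≠ y → n + 1 ≤ k + (symmDiff (cN x) (cN y)).card := by
    intro x y hxy
    by_contra hc
    push_neg at hc
    have hbig : k ≤ (Finset.univ \ symmDiff (cN x) (cN y)).card := by
      rw [Finset.card_sdiff_of_subset (Finset.subset_univ _), Finset.card_univ]
      have := Finset.card_le_univ (symmDiff (cN x) (cN y))
      omega
    obtain ⟨C, hCsub, hCcard⟩ := Finset.exists_subset_card_eq hbig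
    apply hxy
    apply (h ↑C (by rw [Set.ncard_coe_finset, hCcard])).2 x y
    ext z
    simp only [Set.mem_inter_iff, hcN_coe, Finset.mem_coe]
    constructor
    · rintro ⟨hz1, hz2⟩
      refine ⟨?_, hz2⟩
      have := hCsub hz2
      rw [Finset.mem_sdiff] at this
      have hns := this.2
      rw [Finset.mem_symmDiff] at hns
      push_neg at hns
      tauto
    · rintro ⟨hz1, hz2⟩
      refine ⟨?_, hz2⟩
      have := hCsub hz2
      rw [Finset.mem_sdiff] at this
      have hns := this.2
      rw [Finset.mem_symmDiff] at hns
      push_neg at hns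
      tauto
  -- per-vertex structures
  set W : V → Finset V := fun x => Finset.univ \ cN x with hW
  set A : V → V → Finset V := fun x u => (G.neighborFinset u).erase x with hA
  have hWcard : ∀ x : V, (W x).card = n - (G.degree x + 1) := by
    intro x
    rw [hW]
    rw [Finset.card_sdiff_of_subset (Finset.subset_univ _), Finset.card_univ, hcard_cN]
  have hdeg_lt : ∀ x : V, G.degree x + 1 ≤ n := by
    intro x
    have h1 := Finset.card_le_univ (cN x)
    rw [hcard_cN] at h1
    have h2 : (Finset.univ : Finset V).card = n := by rw [Finset.card_univ, hn]
    omega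
  -- A x u lands in W x
  have hAW : ∀ x u : V, G.Adj x u → A x u ⊆ W x := by
    intro x u hadj z hz
    rw [hA] at hz
    simp only [Finset.mem_erase, SimpleGraph.mem_neighborFinset] at hz
    obtain ⟨hzx, hzu⟩ := hz
    rw [hW, Finset.mem_sdiff]
    refine ⟨Finset.mem_univ _, ?_⟩
    rw [hcN]
    simp only [Finset.mem_insert, SimpleGraph.mem_neighborFinset]
    rintro (rfl | hxz)
    · exact hzx rfl
    · -- triangle x u z
      exact htf {x, u, z} (SimpleGraph.is3Clique_triple_iff.mpr ⟨hadj, hxz, hzu⟩)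
  -- symmDiff of closed nbhds vs symmDiff of A's
  have hsub : ∀ x u v : V, G.Adj x u → G.Adj x v →
      symmDiff (cN u) (cN v) ⊆ insert u (insert v (symmDiff (A x u) (A x v))) := by
    intro x u v hu hv z hz
    simp only [Finset.mem_insert]
    by_cases hzu : z = u
    · exact Or.inl hzu
    by_cases hzv : z = v
    · exact Or.inr (Or.inl hzv)
    refine Or.inr (Or.inr ?_)
    rw [Finset.mem_symmDiff] at hz ⊢
    have hxu : x ∈ cN u := by
      rw [hcN]; simp only [Finset.mem_insert, SimpleGraph.mem_neighborFinset]
      exact Or.inr hu.symm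
    have hxv : x ∈ cN v := by
      rw [hcN]; simp only [Finset.mem_insert, SimpleGraph.mem_neighborFinset]
      exact Or.inr hv.symm
    have hmem : ∀ w : V, z ≠ w → (z ∈ cN w ↔ z ∈ G.neighborFinset w) := by
      intro w hzw
      rw [hcN]
      simp only [Finset.mem_insert]
      tauto
    have hmemA : ∀ w : V, z ≠ w → z ≠ x → (z ∈ A x w ↔ z ∈ cN w) := by
      intro w hzw hzx
      rw [hA]
      simp only [Finset.mem_erase]
      rw [← hmem w hzw]
      tauto
    rcases hz with ⟨h1, h2⟩ | ⟨h1, h2⟩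
    · have hzx : z ≠ x := fun he => h2 (he ▸ hxv)
      exact Or.inl ⟨(hmemA u hzu hzx).mpr h1, fun hc => h2 ((hmemA v hzv hzx).mp hc)⟩
    · have hzx : z ≠ x := fun he => h2 (he ▸ hxu)
      exact Or.inr ⟨(hmemA v hzv hzx).mpr h1, fun hc => h2 ((hmemA u hzu hzx).mp hc)⟩
  -- distance bound for the A sets
  have hdist : ∀ x u v : V, G.Adj x u → G.Adj x v → u ≠ v →
      n - k - 1 ≤ (symmDiff (A x u) (A x v)).card := by
    intro x u v hu hv huv
    have h1 := I2 u v huv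
    have h2 := Finset.card_le_card (hsub x u v hu hv)
    have h3 := Finset.card_insert_le u (insert v (symmDiff (A x u) (A x v)))
    have h4 := Finset.card_insert_le v (symmDiff (A x u) (A x v))
    omega
  -- symmDiff of A's lives in W x
  have hdistW : ∀ x u v : V, G.Adj x u → G.Adj x v →
      symmDiff (A x u) (A x v) ⊆ W x := by
    intro x u v hu hv z hz
    rw [Finset.mem_symmDiff] at hz
    rcases hz with ⟨h1, _⟩ | ⟨h1, _⟩
    · exact hAW x u hu h1
    · exact hAW x v hv h1
  -- two distinct neighbours exist
  have hdeg2 : ∀ x : V, 2 ≤ G.degree x := by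
    intro x
    have := I1 x
    omega
  -- degree ≤ k
  have hdk : ∀ x : V, G.degree x ≤ k := by
    intro x
    have h2 : 1 < (G.neighborFinset x).card := hdeg2 x
    obtain ⟨u, hu, v, hv, huv⟩ := Finset.one_lt_card.mp h2
    rw [SimpleGraph.mem_neighborFinset] at hu hv
    have hd := hdist x u v hu hv huv
    have hle := Finset.card_le_card (hdistW x u v hu hv)
    have hw := hWcard x
    have := hdeg_lt x
    omega
  -- the Plotkin inequality at every vertex
  have hplotkin : ∀ x : V, 2 * ((G.degree x : ℤ) * ((G.degree x : ℤ) - 1) * ((n - k - 1 : ℕ) : ℤ))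
      ≤ ((W x).card : ℤ) * (G.degree x : ℤ)^2 := by
    intro x
    have := plotkin (G.neighborFinset x) (W x) (A x)
      (fun u hu => hAW x u (by rwa [SimpleGraph.mem_neighborFinset] at hu))
      (n - k - 1)
      (fun u hu v hv huv => by
        have := hdist x u v (by rwa [SimpleGraph.mem_neighborFinset] at hu)
          (by rwa [SimpleGraph.mem_neighborFinset] at hv) huv
        exact_mod_cast this)
    exact this
  -- everything is as in the extremal case
  have hkey : ∀ x : V, k = 6 ∧ n = 10 ∧ G.degree x = 4 := by
    intro x
    have hp := hplotkin x
    have h1 := I1 x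
    have h2 := hdk x
    have h3 := hdeg_lt x
    have hw := hWcard x
    have hcast1 : ((n - k - 1 : ℕ) : ℤ) = (n : ℤ) - k - 1 := by
      have : k + 1 ≤ n := by omega
      push_cast [Nat.sub_sub]
      omega
    have hcast2 : (((W x).card : ℕ) : ℤ) = (n : ℤ) - (G.degree x : ℤ) - 1 := by
      rw [hw]
      have : G.degree x + 1 ≤ n := h3
      push_cast [Nat.cast_sub this]
      ring
    rw [hcast1, hcast2] at hp
    have := numericZ k n (G.degree x) (by exact_mod_cast hk)
      (by omega) (by exact_mod_cast h1) (by exact_mod_cast h2) hp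
    refine ⟨by exact_mod_cast this.1, by exact_mod_cast this.2.1, by exact_mod_cast this.2.2⟩
  -- now k = 6, n = 10, G is 4-regular
  have hne : Nonempty V := by
    rw [← Fintype.card_pos_iff, ← hn]
    omega
  obtain ⟨x⟩ := hne
  obtain ⟨hk6, hn10, -⟩ := hkey x
  have hreg : ∀ y : V, G.degree y = 4 := fun y => (hkey y).2.2
  -- parity refinement : the A-sets have size 3, so pairwise symmdiffs are even, hence ≥ 4
  have hAcard : ∀ u : V, G.Adj x u → (A x u).card = 3 := by
    intro u hu
    rw [hA]
    rw [Finset.card_erase_of_mem (by rw [SimpleGraph.mem_neighborFinset]; exact hu.symm)]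
    have : (G.neighborFinset u).card = 4 := hreg u
    omega
  have hd4 : ∀ u ∈ G.neighborFinset x, ∀ v ∈ G.neighborFinset x, u ≠ v →
      ((4 : ℕ) : ℤ) ≤ ((symmDiff (A x u) (A x v)).card : ℤ) := by
    intro u hu v hv huv
    rw [SimpleGraph.mem_neighborFinset] at hu hv
    have h1 := hdist x u v hu hv huv
    have h2 := card_symmDiff_eq (A x u) (A x v)
    rw [hAcard u hu, hAcard v hv] at h2
    have : 4 ≤ (symmDiff (A x u) (A x v)).card := by omega
    exact_mod_cast this
  have hfinal := plotkin (G.neighborFinset x) (W x) (A x)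
    (fun u hu => hAW x u (by rwa [SimpleGraph.mem_neighborFinset] at hu)) 4 hd4
  have hdx : (G.neighborFinset x).card = 4 := hreg x
  have hwx : (W x).card = 5 := by
    rw [hWcard x]
    have : G.degree x = 4 := hreg x
    omega
  rw [hdx, hwx] at hfinal
  norm_num at hfinal
end

section
/- If G is a graph on n vertices containing a triangle, and every k-subset of vertices of G is an identifying set, then n ≤ 3k − 9 (and consequently k ≥ 5). -/
open Set

variable {V : Type*}

lemma symmDiff_big [Fintype V] (G : SimpleGraph V) (k : ℕ)
    (h : EveryKIdentifying G k) {u v : V} (huv : u ≠ v) :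
    Fintype.card V < (symmDiff (closedNbhd G u) (closedNbhd G v)).ncard + k := by
  set D := symmDiff (closedNbhd G u) (closedNbhd G v) with hD
  have hcompl : D.ncard + Dᶜ.ncard = Fintype.card V := by
    rw [Set.ncard_add_ncard_compl, Nat.card_eq_fintype_card]
  have hlt : Dᶜ.ncard < k := by
    by_contra hge
    push_neg at hge
    obtain ⟨C, hCsub, hCcard⟩ := Set.exists_subset_card_eq hge
    have hid := h C hCcard
    apply huv
    apply hid.2
    ext c
    simp only [Set.mem_inter_iff]
    have hiff : c ∈ C → (c ∈ closedNbhd G u ↔ c ∈ closedNbhd G v) := by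
      intro hcC
      have := hCsub hcC
      rw [Set.mem_compl_iff, hD, Set.mem_symmDiff] at this
      push_neg at this
      exact ⟨this.1, this.2⟩
    constructor
    · rintro ⟨hc, hcC⟩
      exact ⟨(hiff hcC).mp hc, hcC⟩
    · rintro ⟨hc, hcC⟩
      exact ⟨(hiff hcC).mpr hc, hcC⟩
  omega

theorem stmt11 [Fintype V] (G : SimpleGraph V) (k : ℕ)
    (hkn : k ≤ Fintype.card V)
    (htri : ∃ x y z : V, G.Adj x y ∧ G.Adj x z ∧ G.Adj y z)
    (h : EveryKIdentifying G k) :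
    Fintype.card V ≤ 3 * k - 9 ∧ 5 ≤ k := by
  obtain ⟨x, y, z, hxy, hxz, hyz⟩ := htri
  have hxy' : x ≠ y := hxy.ne
  have hxz' : x ≠ z := hxz.ne
  have hyz' : y ≠ z := hyz.ne
  set n := Fintype.card V with hn
  set D1 := symmDiff (closedNbhd G x) (closedNbhd G y) with hD1
  set D2 := symmDiff (closedNbhd G x) (closedNbhd G z) with hD2
  set D3 := symmDiff (closedNbhd G y) (closedNbhd G z) with hD3
  have h1 : n < D1.ncard + k := symmDiff_big G k h hxy'
  have h2 : n < D2.ncard + k := symmDiff_big G k h hxz'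
  have h3 : n < D3.ncard + k := symmDiff_big G k h hyz'
  -- D3 = D1 ∆ D2
  have hD3eq : D3 = symmDiff D1 D2 := by
    rw [hD1, hD2, hD3, symmDiff_symmDiff_symmDiff_comm, symmDiff_self, bot_symmDiff]
  -- counting: |D1| + |D2| + |D3| = 2 * |D1 ∪ D2|
  have hsum12 : D1.ncard + D2.ncard = (D1 ∪ D2).ncard + (D1 ∩ D2).ncard :=
    (Set.ncard_union_add_ncard_inter D1 D2).symm
  have hdisj : Disjoint (symmDiff D1 D2) (D1 ∩ D2) := by
    rw [symmDiff_eq_sup_sdiff_inf]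
    exact disjoint_sdiff_self_left
  have hunion : symmDiff D1 D2 ∪ (D1 ∩ D2) = D1 ∪ D2 := by
    rw [symmDiff_eq_sup_sdiff_inf]
    exact sdiff_sup_cancel inf_le_sup
  have hsum3 : D3.ncard + (D1 ∩ D2).ncard = (D1 ∪ D2).ncard := by
    rw [hD3eq, ← hunion, Set.ncard_union_eq hdisj]
  -- D1 ∪ D2 ⊆ {x,y,z}ᶜ
  have hxin : ∀ w : V, w ∈ ({x, y, z} : Set V) → w ∉ D1 ∪ D2 := by
    intro w hw hmem
    have hx1 : x ∈ closedNbhd G x := Set.mem_insert _ _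
    have hx2 : x ∈ closedNbhd G y := Set.mem_insert_of_mem _ hxy.symm
    have hx3 : x ∈ closedNbhd G z := Set.mem_insert_of_mem _ hxz.symm
    have hy1 : y ∈ closedNbhd G x := Set.mem_insert_of_mem _ hxy
    have hy2 : y ∈ closedNbhd G y := Set.mem_insert _ _
    have hy3 : y ∈ closedNbhd G z := Set.mem_insert_of_mem _ hyz.symm
    have hz1 : z ∈ closedNbhd G x := Set.mem_insert_of_mem _ hxz
    have hz2 : z ∈ closedNbhd G y := Set.mem_insert_of_mem _ hyz
    have hz3 : z ∈ closedNbhd G z := Set.mem_insert _ _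
    rcases hmem with hm | hm <;> rw [Set.mem_symmDiff] at hm <;>
      rcases hw with rfl | rfl | rfl <;> tauto
  have hsub : D1 ∪ D2 ⊆ ({x, y, z} : Set V)ᶜ := fun w hw hw' => hxin w hw' hw
  have hcard3 : ({x, y, z} : Set V).ncard = 3 := by
    rw [Set.ncard_insert_of_notMem (by simp [hxy', hxz']),
      Set.ncard_insert_of_notMem (by simp [hyz']), Set.ncard_singleton]
  have hcompl3 : ({x, y, z} : Set V).ncard + ({x, y, z} : Set V)ᶜ.ncard = n := by
    rw [Set.ncard_add_ncard_compl, Nat.card_eq_fintype_card]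
  have hle : (D1 ∪ D2).ncard ≤ ({x, y, z} : Set V)ᶜ.ncard :=
    Set.ncard_le_ncard hsub (Set.toFinite _)
  omega
end

section
/- Let q be an odd prime power with q ≡ 1 (mod 4). In the Paley graph P(q), every k-subset of vertices with k = (q+3)/2 is an identifying set. -/
/-!
For `q ≡ 1 (mod 4)` the element `-1` is a square, so `z ∈ N[x]` iff `z = x` or `χ (z - x) = 1`,
where `χ` is the quadratic character. A `k`-set that misses some `N[x]` lies among the
`(q - 1) / 2` non-neighbours of `x`. A `k`-set with `N[x] ∩ C = N[y] ∩ C` for `x ≠ y` lies in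
`{x, y}` together with the `z` where `χ (z - x) * χ (z - y) = 1`; there are `(q - 3) / 2` of
those, because `∑ z, χ (z - x) * χ (z - y) = χ (-1) * J(χ, χ) = -1` for the Jacobi sum `J`.
Both bounds are smaller than `(q + 3) / 2`.
-/

open Set

variable {V : Type*}

open Finset in
lemma Finset.two_mul_card_filter_eq_sign {ι : Type*} (s : Finset ι) {f : ι → ℤ}
    (hf : ∀ i ∈ s, f i = 0 ∨ f i = 1 ∨ f i = -1) {ε : ℤ} (hε : ε = 1 ∨ ε = -1) :
    2 * (#{i ∈ s | f i = ε} : ℤ) = ∑ i ∈ s, (f i ^ 2 + ε * f i) := by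
  rw [natCast_card_filter, mul_sum]
  refine sum_congr rfl fun i hi => ?_
  rcases hf i hi with h | h | h <;> rcases hε with rfl | rfl <;> simp [h]

namespace MulChar

variable {F R : Type*} [Field F] [Fintype F] [CommRing R]

lemma sum_apply_sub_mul_apply_sub_eq_mul_jacobiSum (χ ψ : MulChar F R) {x y : F}
    (hxy : x ≠ y) :
    ∑ z, χ (z - x) * ψ (z - y) = χ (y - x) * ψ (x - y) * jacobiSum χ ψ := by
  have hd : y - x ≠ 0 := sub_ne_zero.2 hxy.symm
  rw [jacobiSum, Finset.mul_sum]
  refine (Fintype.sum_equiv ((Equiv.mulLeft₀ _ hd).trans (Equiv.addLeft x)) _ _ fun t => ?_).symm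
  show _ = χ (x + (y - x) * t - x) * ψ (x + (y - x) * t - y)
  rw [show x + (y - x) * t - x = (y - x) * t by ring,
    show x + (y - x) * t - y = (x - y) * (1 - t) by ring, map_mul, map_mul]
  ring

namespace IsQuadratic

variable {χ : MulChar F R}

lemma sum_sq_apply_sub (hχ : χ.IsQuadratic) (x : F) :
    ∑ z, χ (z - x) ^ 2 = Fintype.card F - 1 := by
  classical
  simp only [← χ.pow_apply' two_ne_zero, hχ.sq_eq_one]
  rw [Fintype.sum_equiv (Equiv.subRight x) (fun z => (1 : MulChar F R) (z - x)) _ fun _ => rfl,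
    sum_one_eq_card_units, Fintype.card_units, Nat.cast_sub Fintype.card_pos, Nat.cast_one]

lemma sum_sq_apply_sub_mul_apply_sub (hχ : χ.IsQuadratic) {x y : F} (hxy : x ≠ y) :
    ∑ z, (χ (z - x) * χ (z - y)) ^ 2 = Fintype.card F - 2 := by
  classical
  simp only [mul_pow, ← χ.pow_apply' two_ne_zero, hχ.sq_eq_one]
  rw [sum_apply_sub_mul_apply_sub_eq_mul_jacobiSum _ _ hxy, jacobiSum_one_one,
    one_apply (sub_ne_zero.2 hxy.symm).isUnit, one_apply (sub_ne_zero.2 hxy).isUnit]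
  ring

lemma sum_apply_sub_mul_apply_sub [IsDomain R] (hχ : χ.IsQuadratic) (hχ₁ : χ ≠ 1) {x y : F}
    (hxy : x ≠ y) : ∑ z, χ (z - x) * χ (z - y) = -1 := by
  classical
  have hsq : χ (-1) ^ 2 * χ (y - x) ^ 2 = 1 := by
    simp only [← χ.pow_apply' two_ne_zero, hχ.sq_eq_one]
    rw [one_apply isUnit_one.neg, one_apply (sub_ne_zero.2 hxy.symm).isUnit, one_mul]
  rw [sum_apply_sub_mul_apply_sub_eq_mul_jacobiSum _ _ hxy, ← congrArg (jacobiSum χ) hχ.inv,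
    jacobiSum_nontrivial_inv hχ₁, ← neg_sub y x, neg_eq_neg_one_mul (y - x), map_mul, ← hsq]
  ring

variable {χ : MulChar F ℤ}

open Finset in
lemma two_mul_card_apply_sub_eq_neg_one [DecidableEq F] (hχ : χ.IsQuadratic) (hχ₁ : χ ≠ 1)
    (x : F) : 2 * (#{z | χ (z - x) = -1} : ℤ) = Fintype.card F - 1 := by
  rw [two_mul_card_filter_eq_sign _ (fun z _ => hχ (z - x)) (Or.inr rfl), sum_add_distrib,
    hχ.sum_sq_apply_sub, ← mul_sum,
    Fintype.sum_equiv (Equiv.subRight x) (fun z => χ (z - x)) _ fun _ => rfl,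
    sum_eq_zero_of_ne_one hχ₁, mul_zero, add_zero]

open Finset in
lemma two_mul_card_apply_sub_mul_apply_sub_eq_one (hχ : χ.IsQuadratic) (hχ₁ : χ ≠ 1) {x y : F}
    (hxy : x ≠ y) : 2 * (#{z | χ (z - x) * χ (z - y) = 1} : ℤ) = Fintype.card F - 3 := by
  rw [two_mul_card_filter_eq_sign _ (fun z _ => (map_mul χ _ _).symm ▸ hχ _) (Or.inl rfl),
    sum_add_distrib, hχ.sum_sq_apply_sub_mul_apply_sub hxy, ← mul_sum,
    hχ.sum_apply_sub_mul_apply_sub hχ₁ hxy]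
  ring

end IsQuadratic

end MulChar

theorem everyKIdentifying_of_ncard_lt [Finite V] (G : SimpleGraph V) {k : ℕ}
    (hdom : ∀ x, (closedNbhd G x)ᶜ.ncard < k)
    (hsep : ∀ x y, x ≠ y → {z | z ∈ closedNbhd G x ↔ z ∈ closedNbhd G y}.ncard < k) :
    EveryKIdentifying G k := by
  refine fun C hC => ⟨fun x => ?_, fun x y hxy => ?_⟩
  · by_contra hempty
    have hsub : C ⊆ (closedNbhd G x)ᶜ := fun z hz hzx => hempty ⟨z, hzx, hz⟩
    exact (hdom x).not_ge (hC ▸ Set.ncard_le_ncard hsub)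
  · by_contra hne
    have hsub : C ⊆ {z | z ∈ closedNbhd G x ↔ z ∈ closedNbhd G y} := fun z hz => by
      simpa [hz] using Set.ext_iff.1 hxy z
    exact (hsep x y hne).not_ge (hC ▸ Set.ncard_le_ncard hsub)

def paleyGraph (F : Type*) [Field F] : SimpleGraph F :=
  SimpleGraph.fromRel fun x y : F => ∃ z : F, z ≠ 0 ∧ x - y = z ^ 2

section Paley

variable {F : Type*} [Field F] [Fintype F] [DecidableEq F]

lemma exists_ne_zero_eq_sq_iff_quadraticChar_eq_one {a : F} :
    (∃ z : F, z ≠ 0 ∧ a = z ^ 2) ↔ quadraticChar F a = 1 := by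
  refine ⟨fun ⟨z, hz, ha⟩ => ha ▸ quadraticChar_sq_one' hz, fun h => ?_⟩
  have ha : a ≠ 0 := by rintro rfl; simp at h
  obtain ⟨z, rfl⟩ := (quadraticChar_one_iff_isSquare ha).1 h
  exact ⟨z, by rintro rfl; simp at ha, by ring⟩

lemma paleyGraph_adj (h : IsSquare (-1 : F)) {x y : F} :
    (paleyGraph F).Adj x y ↔ quadraticChar F (y - x) = 1 := by
  have hsymm : quadraticChar F (x - y) = quadraticChar F (y - x) := by
    rw [← neg_sub, neg_eq_neg_one_mul, map_mul,
      (quadraticChar_one_iff_isSquare (neg_ne_zero.2 one_ne_zero)).2 h, one_mul]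
  rw [paleyGraph, SimpleGraph.fromRel_adj, exists_ne_zero_eq_sq_iff_quadraticChar_eq_one,
    exists_ne_zero_eq_sq_iff_quadraticChar_eq_one, hsymm, or_self]
  exact ⟨And.right, fun hyx => ⟨by rintro rfl; simp at hyx, hyx⟩⟩

lemma mem_closedNbhd_paleyGraph (h : IsSquare (-1 : F)) {x z : F} :
    z ∈ closedNbhd (paleyGraph F) x ↔ z = x ∨ quadraticChar F (z - x) = 1 := by
  rw [closedNbhd, Set.mem_insert_iff, SimpleGraph.mem_neighborSet, paleyGraph_adj h]

lemma compl_closedNbhd_paleyGraph (h : IsSquare (-1 : F)) (x : F) :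
    (closedNbhd (paleyGraph F) x)ᶜ = {z | quadraticChar F (z - x) = -1} := by
  ext z
  rw [Set.mem_compl_iff, mem_closedNbhd_paleyGraph h, Set.mem_ofPred_eq, not_or]
  refine ⟨fun ⟨hzx, hz⟩ => (quadraticChar_dichotomy (sub_ne_zero.2 hzx)).resolve_left hz,
    fun hz => ⟨by rintro rfl; simp at hz, by rw [hz]; decide⟩⟩

lemma setOf_mem_closedNbhd_paleyGraph_iff_subset (h : IsSquare (-1 : F)) (x y : F) :
    {z | z ∈ closedNbhd (paleyGraph F) x ↔ z ∈ closedNbhd (paleyGraph F) y} ⊆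
      {x, y} ∪ {z | quadraticChar F (z - x) * quadraticChar F (z - y) = 1} := by
  intro z hz
  by_cases hzx : z = x
  · exact Or.inl (Or.inl hzx)
  by_cases hzy : z = y
  · exact Or.inl (Or.inr hzy)
  simp only [Set.mem_ofPred_eq, mem_closedNbhd_paleyGraph h, hzx, hzy, false_or] at hz
  right
  rcases quadraticChar_dichotomy (sub_ne_zero.2 hzx) with h₁ | h₁ <;>
    rcases quadraticChar_dichotomy (sub_ne_zero.2 hzy) with h₂ | h₂ <;>
    simp_all

end Paley

theorem stmt13 (F : Type*) [Field F] [Fintype F] (h4 : Fintype.card F % 4 = 1) :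
    EveryKIdentifying
      (SimpleGraph.fromRel fun x y : F => ∃ z : F, z ≠ 0 ∧ x - y = z ^ 2)
      ((Fintype.card F + 3) / 2) := by
  classical
  have hF : ringChar F ≠ 2 := fun h => by
    have := FiniteField.even_card_of_char_two h
    omega
  have hneg : IsSquare (-1 : F) := FiniteField.isSquare_neg_one_iff.2 (by omega)
  have hχ := quadraticChar_isQuadratic F
  have hχ₁ := quadraticChar_ne_one hF
  refine everyKIdentifying_of_ncard_lt (paleyGraph F) (fun x => ?_) (fun x y hxy => ?_)
  · have hcard := hχ.two_mul_card_apply_sub_eq_neg_one hχ₁ x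
    rw [compl_closedNbhd_paleyGraph hneg, Set.ncard_eq_toFinset_card', Set.toFinset_ofPred]
    omega
  · have hcard := hχ.two_mul_card_apply_sub_mul_apply_sub_eq_one hχ₁ hxy
    calc _ ≤ ({x, y} ∪ {z | quadraticChar F (z - x) * quadraticChar F (z - y) = 1}).ncard :=
          Set.ncard_le_ncard (setOf_mem_closedNbhd_paleyGraph_iff_subset hneg x y)
      _ ≤ 2 + Finset.card {z | quadraticChar F (z - x) * quadraticChar F (z - y) = 1} := by
          refine (Set.ncard_union_le _ _).trans_eq ?_
          rw [Set.ncard_pair hxy, Set.ncard_eq_toFinset_card', Set.toFinset_ofPred]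
      _ < _ := by omega
end

section
/- Let G be a graph on n vertices in which every k-subset of vertices is an identifying set, and let 1 ≤ s ≤ n. If S is a uniformly random s-subset of V, then the probability that S is identifying is at least 1 − C(n+1, 2) · C(k−1, s) / C(n, s). -/
/-!
To an unordered pair `e = {x, y}` of vertices, `x = y` allowed, attach its separating set
`D e`: `N[x]` if `x = y`, and `N[x] ∆ N[y]` otherwise. A set is identifying exactly when it
meets every `D e`. If every `k`-set is identifying, no `k`-set avoids `D e`, so fewer than `k`
vertices lie outside `D e` and at most `C(k - 1, s)` of the `s`-sets avoid it. A union bound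
over the `C(n + 1, 2)` pairs bounds the number of non-identifying `s`-sets by
`C(n + 1, 2) · C(k - 1, s)`.
-/

open Set

variable {V : Type*}

open scoped Finset symmDiff

theorem Set.natCard_ncard_eq_and_eq_card_filter_powersetCard {α : Type*} [Fintype α] (s : ℕ)
    (p : Set α → Prop) [DecidablePred fun T : Finset α => p T] :
    Nat.card {S : Set α // S.ncard = s ∧ p S} =
      #((Finset.univ.powersetCard s).filter fun T : Finset α => p T) := by
  have e := Fintype.finsetEquivSet.subtypeEquiv (p := fun T : Finset α => #T = s ∧ p T)
    (q := fun S : Set α => S.ncard = s ∧ p S) fun T => by simp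
  rw [← Nat.card_congr e, Nat.card_eq_fintype_card, Fintype.card_subtype,
    ← Finset.univ_filter_card_eq, Finset.filter_filter]

namespace SimpleGraph

variable (G : SimpleGraph V)

open Classical in
noncomputable def separatingSet : Sym2 V → Set V :=
  Sym2.lift ⟨fun x y => if x = y then closedNbhd G x else closedNbhd G x ∆ closedNbhd G y, by
    intro x y
    by_cases hxy : x = y
    · subst hxy; rfl
    · simp only [hxy, Ne.symm hxy, if_false, symmDiff_comm]⟩

@[simp]
theorem separatingSet_diag (x : V) : G.separatingSet s(x, x) = closedNbhd G x := by
  simp [separatingSet]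

theorem separatingSet_of_ne {x y : V} (hxy : x ≠ y) :
    G.separatingSet s(x, y) = closedNbhd G x ∆ closedNbhd G y := by
  simp [separatingSet, hxy]

theorem isIdentifying_iff_forall_separatingSet_inter_nonempty {C : Set V} :
    IsIdentifying G C ↔ ∀ e, (G.separatingSet e ∩ C).Nonempty := by
  have key : ∀ {x y : V}, x ≠ y → ((G.separatingSet s(x, y) ∩ C).Nonempty ↔
      closedNbhd G x ∩ C ≠ closedNbhd G y ∩ C) :=
    fun hxy => by rw [G.separatingSet_of_ne hxy, inter_symmDiff_distrib_right, symmDiff_nonempty]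
  constructor
  · rintro ⟨hdom, hsep⟩ e
    induction e using Sym2.ind with
    | _ x y =>
      by_cases hxy : x = y
      · subst hxy
        simpa using hdom x
      · exact (key hxy).2 fun h => hxy (hsep x y h)
  · intro h
    refine ⟨fun x => by simpa using h s(x, x), fun x y hxy => ?_⟩
    by_contra hne
    exact (key hne).1 (h s(x, y)) hxy

theorem ncard_compl_separatingSet_lt {k : ℕ} (h : EveryKIdentifying G k) (e : Sym2 V) :
    (G.separatingSet e)ᶜ.ncard < k := by
  by_contra! hk
  obtain ⟨T, hT, hTk⟩ := Set.exists_subset_card_eq hk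
  obtain ⟨v, hvD, hvT⟩ := G.isIdentifying_iff_forall_separatingSet_inter_nonempty.1 (h T hTk) e
  exact hT hvT hvD

theorem choose_le_natCard_isIdentifying_add [Fintype V] {k : ℕ} (h : EveryKIdentifying G k)
    (s : ℕ) :
    (Fintype.card V).choose s ≤ Nat.card {S : Set V // S.ncard = s ∧ IsIdentifying G S} +
      (Fintype.card V + 1).choose 2 * (k - 1).choose s := by
  classical
  set P := (Finset.univ : Finset V).powersetCard s
  have hbad : P.filter (fun T : Finset V => ¬IsIdentifying G T) ⊆
      Finset.univ.biUnion fun e => (G.separatingSet e)ᶜ.toFinset.powersetCard s := by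
    intro T hT
    rw [Finset.mem_filter, Finset.mem_powersetCard_univ,
      isIdentifying_iff_forall_separatingSet_inter_nonempty, not_forall] at hT
    obtain ⟨hTs, e, he⟩ := hT
    refine Finset.mem_biUnion.2 ⟨e, Finset.mem_univ e, Finset.mem_powersetCard.2 ⟨?_, hTs⟩⟩
    intro v hv
    simpa using fun hvD => he ⟨v, hvD, hv⟩
  have hsmall : ∀ e, #(G.separatingSet e)ᶜ.toFinset ≤ k - 1 := fun e => by
    rw [← ncard_eq_toFinset_card']
    exact Nat.le_sub_one_of_lt (G.ncard_compl_separatingSet_lt h e)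
  calc (Fintype.card V).choose s
      = #(P.filter fun T : Finset V => IsIdentifying G T) +
        #(P.filter fun T : Finset V => ¬IsIdentifying G T) := by
        rw [Finset.card_filter_add_card_filter_not, Finset.card_powersetCard, Finset.card_univ]
    _ ≤ _ := by
      rw [natCard_ncard_eq_and_eq_card_filter_powersetCard]
      gcongr
      calc _ ≤ _ := Finset.card_le_card hbad
        _ ≤ #(Finset.univ : Finset (Sym2 V)) * (k - 1).choose s :=
          Finset.card_biUnion_le_card_mul _ _ _ fun e _ => by
            rw [Finset.card_powersetCard]
            exact Nat.choose_le_choose s (hsmall e)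
        _ = _ := by rw [Finset.card_univ, Sym2.card]

end SimpleGraph

theorem stmt14_general [Fintype V] (G : SimpleGraph V) (n k s : ℕ)
    (hn : Fintype.card V = n) (h : EveryKIdentifying G k)
    (hsn : s ≤ n) :
    (1 : ℝ) - ((n + 1).choose 2 : ℝ) * ((k - 1).choose s : ℝ) / (n.choose s : ℝ) ≤
      (Nat.card {S : Set V // S.ncard = s ∧ IsIdentifying G S} : ℝ) / (n.choose s : ℝ) := by
  have hpos : (0 : ℝ) < n.choose s := mod_cast Nat.choose_pos hsn
  have hcount := G.choose_le_natCard_isIdentifying_add h s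
  rw [hn] at hcount
  rw [sub_le_iff_le_add, ← add_div, le_div_iff₀ hpos, one_mul]
  exact_mod_cast hcount

theorem stmt14 [Fintype V] (G : SimpleGraph V) (n k s : ℕ)
    (hn : Fintype.card V = n) (h : EveryKIdentifying G k)
    (hs1 : 1 ≤ s) (hsn : s ≤ n) :
    (1 : ℝ) - ((n + 1).choose 2 : ℝ) * ((k - 1).choose s : ℝ) / (n.choose s : ℝ) ≤
      (Nat.card {S : Set V // S.ncard = s ∧ IsIdentifying G S} : ℝ) / (n.choose s : ℝ) :=
  stmt14_general G n k s hn h hsn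
end

section
/- Let G be a graph on n vertices in which every k-subset of vertices is an identifying set, with k ≥ 2. If s is an integer with log(C(n+1,2)) / log(n/(k−1)) < s ≤ n, then G contains an identifying set of size s. -/
open Set

variable {V : Type*}

/-!
Call a vertex `a` *blind* to the pair `{x, y}` if it does not see `{x, y}` apart: `a` lies in
neither `N[x]` nor `N[y]`, or (when `x ≠ y`) in both. A set `C` is identifying exactly when it is
not contained in the blind set of any of the `C(n+1,2)` pairs `{x, y}` (with `x = y` allowed).
If every `k`-set is identifying, each blind set has fewer than `k` vertices, so at most
`C(n+1,2) · C(k-1,s)` of the `s`-sets are not identifying. Since `C(k-1,s)/C(n,s) ≤ ((k-1)/n)^s`,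
the lower bound on `s` makes this less than `C(n,s)`.
-/

open Finset

namespace Nat

theorem descFactorial_mul_pow_le_of_le {m n : ℕ} (h : m ≤ n) (s : ℕ) :
    m.descFactorial s * n ^ s ≤ n.descFactorial s * m ^ s := by
  induction s with
  | zero => simp
  | succ s ih =>
    have hstep : (m - s) * n ≤ (n - s) * m := by
      rw [Nat.sub_mul, Nat.sub_mul, mul_comm n m]
      exact Nat.sub_le_sub_left (Nat.mul_le_mul_left s h) _
    rw [descFactorial_succ, descFactorial_succ, pow_succ, pow_succ]
    calc (m - s) * m.descFactorial s * (n ^ s * n)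
        = ((m - s) * n) * (m.descFactorial s * n ^ s) := by ring
      _ ≤ ((n - s) * m) * (n.descFactorial s * m ^ s) := Nat.mul_le_mul hstep ih
      _ = (n - s) * n.descFactorial s * (m ^ s * m) := by ring

theorem choose_mul_pow_le_of_le {m n : ℕ} (h : m ≤ n) (s : ℕ) :
    m.choose s * n ^ s ≤ n.choose s * m ^ s := by
  have := descFactorial_mul_pow_le_of_le h s
  rw [descFactorial_eq_factorial_mul_choose, descFactorial_eq_factorial_mul_choose,
    mul_assoc, mul_assoc] at this
  exact Nat.le_of_mul_le_mul_left this s.factorial_pos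

theorem mul_choose_lt_choose_of_mul_pow_lt {M m n s : ℕ} (hmn : m ≤ n) (hsn : s ≤ n)
    (h : M * m ^ s < n ^ s) : M * m.choose s < n.choose s := by
  refine Nat.lt_of_mul_lt_mul_right (a := n ^ s) ?_
  calc M * m.choose s * n ^ s ≤ M * (n.choose s * m ^ s) := by
        rw [mul_assoc]; exact Nat.mul_le_mul_left M (choose_mul_pow_le_of_le hmn s)
    _ = M * m ^ s * n.choose s := by ring
    _ < n ^ s * n.choose s := Nat.mul_lt_mul_of_pos_right h (choose_pos hsn)
    _ = n.choose s * n ^ s := mul_comm _ _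

end Nat

theorem Real.lt_pow_of_log_div_log_lt {a r : ℝ} {s : ℕ} (ha : 0 < a) (hr : 1 < r)
    (h : Real.log a / Real.log r < s) : a < r ^ s := by
  rw [div_lt_iff₀ (Real.log_pos hr), ← Real.log_pow] at h
  exact (Real.log_lt_log_iff ha (pow_pos (zero_lt_one.trans hr) s)).mp h

theorem Finset.exists_card_eq_forall_not_subset {α ι : Type*} [Fintype α] [Fintype ι]
    {B : ι → Set α} {m s : ℕ} (hB : ∀ i, (B i).ncard ≤ m)
    (h : Fintype.card ι * m.choose s < (Fintype.card α).choose s) :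
    ∃ A : Finset α, #A = s ∧ ∀ i, ¬ (A : Set α) ⊆ B i := by
  classical
  by_contra! hcover
  have hsub : powersetCard s univ ⊆ univ.biUnion fun i => powersetCard s (B i).toFinset := by
    intro A hA
    obtain ⟨i, hi⟩ := hcover A (mem_powersetCard.mp hA).2
    exact mem_biUnion.mpr ⟨i, mem_univ i,
      mem_powersetCard.mpr ⟨Set.subset_toFinset.mpr hi, (mem_powersetCard.mp hA).2⟩⟩
  refine (h.trans_le ?_).false
  calc (Fintype.card α).choose s = #(powersetCard s (univ : Finset α)) := by
        rw [card_powersetCard, card_univ]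
    _ ≤ ∑ i, #(powersetCard s (B i).toFinset) := (card_le_card hsub).trans card_biUnion_le
    _ ≤ ∑ _i : ι, m.choose s := by
        refine sum_le_sum fun i _ => ?_
        rw [card_powersetCard, ← Set.ncard_eq_toFinset_card']
        exact Nat.choose_le_choose s (hB i)
    _ = Fintype.card ι * m.choose s := by simp

def blindSet (G : SimpleGraph V) (p : Sym2 V) : Set V :=
  {a | (∀ x ∈ p, a ∉ closedNbhd G x) ∨ (¬ p.IsDiag ∧ ∀ x ∈ p, a ∈ closedNbhd G x)}

theorem mem_blindSet_mk {G : SimpleGraph V} {x y a : V} :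
    a ∈ blindSet G s(x, y) ↔
      (a ∉ closedNbhd G x ∧ a ∉ closedNbhd G y) ∨
        (x ≠ y ∧ a ∈ closedNbhd G x ∧ a ∈ closedNbhd G y) := by
  simp only [blindSet, Set.mem_ofPred_eq, Sym2.forall_mem_pair, Sym2.mk_isDiag_iff]

theorem isIdentifying_iff_forall_not_subset_blindSet {G : SimpleGraph V} {C : Set V} :
    IsIdentifying G C ↔ ∀ p, ¬ C ⊆ blindSet G p := by
  constructor
  · rintro ⟨hne, hinj⟩ p hp
    induction p using Sym2.ind with | _ x y => ?_
    by_cases hxy : x = y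
    · subst hxy
      obtain ⟨a, hax, haC⟩ := hne x
      simpa [mem_blindSet_mk, hax] using hp haC
    · refine hxy (hinj x y (Set.ext fun a => and_congr_left fun haC => ?_))
      rcases mem_blindSet_mk.mp (hp haC) with ⟨hax, hay⟩ | ⟨-, hax, hay⟩
      exacts [iff_of_false hax hay, iff_of_true hax hay]
  · intro h
    refine ⟨fun x => ?_, fun x y hxy => ?_⟩
    · obtain ⟨a, haC, ha⟩ := Set.not_subset.mp (h s(x, x))
      exact ⟨a, by simpa [mem_blindSet_mk] using ha, haC⟩
    · by_contra hne
      refine h s(x, y) fun a haC => mem_blindSet_mk.mpr ?_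
      have := Set.ext_iff.mp hxy a
      simp only [Set.mem_inter_iff, haC, and_true] at this
      tauto

theorem EveryKIdentifying.ncard_blindSet_lt [Finite V] {G : SimpleGraph V} {k : ℕ}
    (h : EveryKIdentifying G k) (p : Sym2 V) : (blindSet G p).ncard < k := by
  by_contra! hk
  obtain ⟨C, hC, hCk⟩ := Set.exists_subset_card_eq hk
  exact isIdentifying_iff_forall_not_subset_blindSet.mp (h C hCk) p hC

theorem stmt15 [Fintype V] (G : SimpleGraph V) (n k s : ℕ)
    (hn : Fintype.card V = n) (hk : 2 ≤ k) (hkn : k ≤ n)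
    (h : EveryKIdentifying G k)
    (hs1 : Real.log ((n + 1).choose 2) / Real.log ((n : ℝ) / ((k : ℝ) - 1)) < (s : ℝ))
    (hsn : s ≤ n) :
    ∃ S : Set V, S.ncard = s ∧ IsIdentifying G S := by
  classical
  have hk1 : ((k - 1 : ℕ) : ℝ) = (k : ℝ) - 1 := by rw [Nat.cast_sub (by omega), Nat.cast_one]
  have hk1_pos : (0 : ℝ) < (k - 1 : ℕ) := by exact_mod_cast (by omega : 0 < k - 1)
  have hratio : (1 : ℝ) < n / (k - 1 : ℕ) := by
    rw [one_lt_div hk1_pos]; exact_mod_cast (by omega : k - 1 < n)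
  have hpow := Real.lt_pow_of_log_div_log_lt (a := (n + 1).choose 2) (s := s)
    (by exact_mod_cast Nat.choose_pos (by omega)) hratio (by rwa [hk1])
  rw [div_pow, lt_div_iff₀ (pow_pos hk1_pos s)] at hpow
  have hcount : Fintype.card (Sym2 V) * (k - 1).choose s < (Fintype.card V).choose s := by
    rw [Sym2.card, hn]
    exact Nat.mul_choose_lt_choose_of_mul_pow_lt (by omega) hsn (by exact_mod_cast hpow)
  obtain ⟨A, hA, hAblind⟩ := exists_card_eq_forall_not_subset
    (fun p => Nat.le_pred_of_lt (h.ncard_blindSet_lt p)) hcount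
  exact ⟨A, by rw [Set.ncard_coe_finset, hA],
    isIdentifying_iff_forall_not_subset_blindSet.mpr hAblind⟩
end

section
/- Let ℓ ≥ 2 and let G be a graph on n vertices with n > k such that every k-subset of vertices is a (1, ≤ℓ)-identifying set. Then for every vertex x: n − k + ℓ + 1 ≤ |N[x]| ≤ k − ℓ; for all distinct vertices x, y: |N[x] ∩ N[y]| ≤ k − 2ℓ + 1; and moreover n ≤ 2k − 2ℓ − 1 and k ≥ 2ℓ + 2. -/
open Set

variable {V : Type*}

/-!
Write `m = n - k + 1`. If `|N[X] ∆ N[Y]| < m`, some `k`-set avoids `N[X] ∆ N[Y]` and fails to separate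
`X` from `Y`; so distinct sets of size at most `ℓ` have `|N[X] ∆ N[Y]| ≥ m ≥ 2`, and hence
`|N[X] ∩ N[Y]| < k`. Each bound comes from one well-chosen pair of such sets:
* `X = {x} ∪ S ⊋ Y = S` with `S ⊆ N[x] \ {x}` of size `ℓ - 1` gives `|N[x]| ≥ m + ℓ`;
* for `Z = {x} ∪ S` with `S` of size `ℓ - 2` outside `N[x]`, the complement of `N[Z]` has at least
  `m + 1` vertices, as otherwise every `N[Z ∪ {t}]` would be the whole vertex set; thus
  `|N[x]ᶜ| ≥ m + 1 + (ℓ - 2)`;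
* for `x ≠ y`, the pairs `{x, y} ∪ T ⊋ {x} ∪ T` give `|N[y] \ N[x]| ≥ m + ℓ - 2 ≥ ℓ`, so there are
  `S_y ⊆ N[y] \ N[x]` and `S_x ⊆ N[x] \ N[y]` of size `ℓ - 1`, and `X = {x} ∪ S_y`, `Y = {y} ∪ S_x`
  give `|N[x] ∩ N[y]| + 2(ℓ - 1) ≤ |N[X] ∩ N[Y]| < k`.
-/

section ClosedNbhd

variable {G : SimpleGraph V}

lemma mem_closedNbhd_self (x : V) : x ∈ closedNbhd G x := mem_insert x _

lemma mem_closedNbhd_comm {x y : V} : y ∈ closedNbhd G x ↔ x ∈ closedNbhd G y := by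
  simp only [closedNbhd, mem_insert_iff, SimpleGraph.mem_neighborSet, G.adj_comm, eq_comm]

lemma mem_nbhdSet {X : Set V} {w : V} : w ∈ nbhdSet G X ↔ ∃ x ∈ X, w ∈ closedNbhd G x := by
  simp [nbhdSet]

@[simp]
lemma nbhdSet_empty : nbhdSet G (∅ : Set V) = ∅ := by
  simp [nbhdSet]

lemma nbhdSet_insert (a : V) (X : Set V) :
    nbhdSet G (insert a X) = closedNbhd G a ∪ nbhdSet G X := by
  simp [nbhdSet]

lemma subset_nbhdSet (X : Set V) : X ⊆ nbhdSet G X :=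
  fun x hx => mem_nbhdSet.2 ⟨x, hx, mem_closedNbhd_self x⟩

end ClosedNbhd

namespace EveryKLIdentifying

variable [Finite V] {G : SimpleGraph V} {k l : ℕ}

lemma card_lt_add_ncard_symmDiff (h : EveryKLIdentifying G k l) {X Y : Set V}
    (hX : X.ncard ≤ l) (hY : Y.ncard ≤ l) (hXY : X ≠ Y) :
    Nat.card V < k + (symmDiff (nbhdSet G X) (nbhdSet G Y)).ncard := by
  set D := symmDiff (nbhdSet G X) (nbhdSet G Y)
  by_contra! hD
  obtain ⟨C, hCD, hC⟩ := exists_subset_card_eq (s := Dᶜ) (n := k)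
    (by have := ncard_add_ncard_compl D; omega)
  refine h C hC X Y hX hY hXY (Set.ext fun w => ?_)
  have hw : w ∈ C → (w ∈ nbhdSet G X ↔ w ∈ nbhdSet G Y) := fun hwC => by
    have := hCD hwC
    simp only [D, mem_compl_iff, mem_symmDiff] at this
    tauto
  simp only [mem_inter_iff]
  tauto

lemma ncard_nbhdSet_inter_lt (h : EveryKLIdentifying G k l) {X Y : Set V}
    (hX : X.ncard ≤ l) (hY : Y.ncard ≤ l) (hXY : X ≠ Y) :
    (nbhdSet G X ∩ nbhdSet G Y).ncard < k := by
  have hΔ := h.card_lt_add_ncard_symmDiff hX hY hXY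
  have hdisj : Disjoint (nbhdSet G X ∩ nbhdSet G Y) (symmDiff (nbhdSet G X) (nbhdSet G Y)) :=
    (disjoint_symmDiff_inf _ _).symm
  have := ncard_le_card (nbhdSet G X ∩ nbhdSet G Y ∪ symmDiff (nbhdSet G X) (nbhdSet G Y))
  rw [ncard_union_eq hdisj] at this
  omega

lemma card_lt_add_ncard_closedNbhd_diff (h : EveryKLIdentifying G k l) {a : V} {Y : Set V}
    (ha : a ∉ Y) (hY : Y.ncard < l) :
    Nat.card V < k + (closedNbhd G a \ nbhdSet G Y).ncard := by
  have hne : insert a Y ≠ Y := fun e => ha (e ▸ mem_insert a Y)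
  have key := h.card_lt_add_ncard_symmDiff (by rw [ncard_insert_of_notMem ha]; omega) hY.le hne
  convert key using 3
  ext w
  simp only [nbhdSet_insert, mem_sdiff, mem_symmDiff, mem_union]
  tauto

lemma card_add_ncard_lt_ncard_closedNbhd (h : EveryKLIdentifying G k l) {x : V} {S : Set V}
    (hS : S ⊆ closedNbhd G x \ {x}) (hSne : S.Nonempty) (hSl : S.ncard < l) :
    Nat.card V + S.ncard + 1 < k + (closedNbhd G x).ncard := by
  have hx : x ∉ S := fun hxS => (hS hxS).2 rfl
  have key := h.card_lt_add_ncard_closedNbhd_diff hx hSl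
  -- `x ∈ N[S]` because `S` is a nonempty set of neighbours of `x`.
  have hdiff : closedNbhd G x \ nbhdSet G S ⊆ closedNbhd G x \ insert x S := by
    rintro w ⟨hwx, hwS⟩
    refine ⟨hwx, ?_⟩
    rintro (rfl | hw)
    · obtain ⟨s, hs⟩ := hSne
      exact hwS (mem_nbhdSet.2 ⟨s, hs, mem_closedNbhd_comm.1 (hS hs).1⟩)
    · exact hwS (subset_nbhdSet S hw)
  have hsplit := ncard_sdiff_add_ncard_of_subset
    (insert_subset (mem_closedNbhd_self x) (hS.trans sdiff_subset))
  rw [ncard_insert_of_notMem hx] at hsplit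
  have := ncard_le_ncard hdiff
  omega

lemma card_add_le_ncard_closedNbhd (h : EveryKLIdentifying G k l) (hl : 2 ≤ l)
    (hnk : k < Nat.card V) (x : V) :
    Nat.card V + l + 1 ≤ k + (closedNbhd G x).ncard := by
  have hdeg := h.card_lt_add_ncard_closedNbhd_diff (notMem_empty x) (by rw [ncard_empty]; omega)
  rw [nbhdSet_empty, sdiff_empty] at hdeg
  have hpunct := ncard_sdiff_singleton_add_one (mem_closedNbhd_self (G := G) x)
  obtain ⟨S, hS, hScard⟩ :=
    exists_subset_card_eq (min_le_right (l - 1) (closedNbhd G x \ {x}).ncard)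
  have := h.card_add_ncard_lt_ncard_closedNbhd hS (nonempty_of_ncard_ne_zero (by omega))
    (by omega)
  omega

lemma card_add_two_le_ncard_compl_nbhdSet (h : EveryKLIdentifying G k l) (hnk : k < Nat.card V)
    {Z : Set V} (hZ : Z.ncard < l) {t : V} (ht : t ∉ Z) :
    Nat.card V + 2 ≤ k + (nbhdSet G Z)ᶜ.ncard := by
  set W := (nbhdSet G Z)ᶜ
  have hsub : ∀ t, closedNbhd G t \ nbhdSet G Z ⊆ W := fun _ _ hw => hw.2
  by_contra! hW
  have hcover : ∀ t ∉ Z, nbhdSet G (insert t Z) = univ := by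
    intro t ht
    have key := h.card_lt_add_ncard_closedNbhd_diff ht hZ
    have heq := eq_of_subset_of_ncard_le (hsub t) (by omega)
    refine eq_univ_of_forall fun w => ?_
    rw [nbhdSet_insert]
    by_cases hw : w ∈ nbhdSet G Z
    · exact Or.inr hw
    · exact Or.inl (heq.symm.subset hw).1
  have hW2 : 1 < W.ncard := by
    have := h.card_lt_add_ncard_closedNbhd_diff ht hZ
    have := ncard_le_ncard (hsub t)
    omega
  obtain ⟨u, v, hu, hv, huv⟩ := (one_lt_ncard_iff).1 hW2
  have hZW : ∀ w ∈ W, w ∉ Z := fun w hw hwZ => hw (subset_nbhdSet Z hwZ)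
  have hne : insert u Z ≠ insert v Z := by
    intro e
    rcases (e ▸ mem_insert u Z : u ∈ insert v Z) with huv' | huZ
    · exact huv huv'
    · exact hZW u hu huZ
  have key := h.card_lt_add_ncard_symmDiff
    (by rw [ncard_insert_of_notMem (hZW u hu)]; omega)
    (by rw [ncard_insert_of_notMem (hZW v hv)]; omega) hne
  rw [hcover u (hZW u hu), hcover v (hZW v hv), symmDiff_self, bot_eq_empty, ncard_empty] at key
  omega

lemma ncard_closedNbhd_add_le (h : EveryKLIdentifying G k l) (hl : 2 ≤ l)
    (hnk : k < Nat.card V) (x : V) :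
    (closedNbhd G x).ncard + l ≤ k := by
  have hlow := h.card_add_le_ncard_closedNbhd hl hnk x
  have hcompl := ncard_add_ncard_compl (closedNbhd G x)
  obtain ⟨S, hS, hScard⟩ :=
    exists_subset_card_eq (min_le_right (l - 2) (closedNbhd G x)ᶜ.ncard)
  have hx : x ∉ S := fun hxS => hS hxS (mem_closedNbhd_self x)
  have hZ : (insert x S).ncard = S.ncard + 1 := ncard_insert_of_notMem hx
  obtain ⟨t, ht⟩ : ∃ t, t ∉ insert x S := by
    by_contra! hall
    have := ncard_univ V
    rw [← eq_univ_of_forall hall] at this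
    omega
  have key := h.card_add_two_le_ncard_compl_nbhdSet hnk (by omega) ht
  have hout : (nbhdSet G (insert x S))ᶜ ⊆ (closedNbhd G x)ᶜ \ S := by
    intro w hw
    rw [nbhdSet_insert, compl_union] at hw
    exact ⟨hw.1, fun hwS => hw.2 (subset_nbhdSet S hwS)⟩
  have := ncard_le_ncard hout
  have := ncard_sdiff_add_ncard_of_subset hS
  omega

lemma exists_subset_closedNbhd_diff (h : EveryKLIdentifying G k l) (hl : 2 ≤ l)
    (hnk : k < Nat.card V) {x y : V} (hxy : x ≠ y) :
    ∃ S ⊆ (closedNbhd G y \ closedNbhd G x) \ {y}, S.ncard = l - 1 := by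
  set D := closedNbhd G y \ closedNbhd G x
  have hD := ncard_le_ncard_sdiff_add_ncard D {y}
  rw [ncard_singleton] at hD
  obtain ⟨T, hT, hTcard⟩ := exists_subset_card_eq (min_le_right (l - 2) (D \ {y}).ncard)
  have hTD : T ⊆ D := hT.trans sdiff_subset
  have hxT : x ∉ T := fun hxT => (hTD hxT).2 (mem_closedNbhd_self x)
  have hy : y ∉ insert x T := by
    rintro (hyx | hyT)
    · exact hxy hyx.symm
    · exact (hT hyT).2 rfl
  have key := h.card_lt_add_ncard_closedNbhd_diff hy
    (by rw [ncard_insert_of_notMem hxT]; omega)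
  have hout : closedNbhd G y \ nbhdSet G (insert x T) ⊆ D \ T := by
    rintro w ⟨hwy, hw⟩
    rw [nbhdSet_insert] at hw
    exact ⟨⟨hwy, fun hwx => hw (Or.inl hwx)⟩, fun hwT => hw (Or.inr (subset_nbhdSet T hwT))⟩
  have := ncard_le_ncard hout
  have := ncard_sdiff_add_ncard_of_subset hTD
  exact exists_subset_card_eq (by omega)

lemma ncard_closedNbhd_inter_add_le (h : EveryKLIdentifying G k l) (hl : 2 ≤ l)
    (hnk : k < Nat.card V) {x y : V} (hxy : x ≠ y) :
    (closedNbhd G x ∩ closedNbhd G y).ncard + 2 * l ≤ k + 1 := by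
  obtain ⟨Sy, hSy, hSycard⟩ := h.exists_subset_closedNbhd_diff hl hnk hxy
  obtain ⟨Sx, hSx, hSxcard⟩ := h.exists_subset_closedNbhd_diff hl hnk hxy.symm
  have hxSy : x ∉ Sy := fun hx => (hSy hx).1.2 (mem_closedNbhd_self x)
  have hySx : y ∉ Sx := fun hy => (hSx hy).1.2 (mem_closedNbhd_self y)
  have hne : insert x Sy ≠ insert y Sx := by
    intro e
    rcases (e ▸ mem_insert x Sy : x ∈ insert y Sx) with hxy' | hxSx
    · exact hxy hxy'
    · exact (hSx hxSx).2 rfl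
  have key := h.ncard_nbhdSet_inter_lt
    (by rw [ncard_insert_of_notMem hxSy]; omega) (by rw [ncard_insert_of_notMem hySx]; omega) hne
  have hA : closedNbhd G x ∩ closedNbhd G y ∪ Sx ∪ Sy ⊆
      nbhdSet G (insert x Sy) ∩ nbhdSet G (insert y Sx) := by
    simp only [nbhdSet_insert]
    rintro w ((hw | hw) | hw)
    · exact ⟨Or.inl hw.1, Or.inl hw.2⟩
    · exact ⟨Or.inl (hSx hw).1.1, Or.inr (subset_nbhdSet Sx hw)⟩
    · exact ⟨Or.inr (subset_nbhdSet Sy hw), Or.inl (hSy hw).1.1⟩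
  have hdisjx : Disjoint (closedNbhd G x ∩ closedNbhd G y) Sx :=
    disjoint_left.2 fun w hw hwSx => (hSx hwSx).1.2 hw.2
  have hdisjy : Disjoint (closedNbhd G x ∩ closedNbhd G y ∪ Sx) Sy :=
    disjoint_left.2 fun w hw hwSy => (hSy hwSy).1.2 (hw.elim (·.1) (fun hw => (hSx hw).1.1))
  have := ncard_le_ncard hA
  rw [ncard_union_eq hdisjy, ncard_union_eq hdisjx] at this
  omega

end EveryKLIdentifying

theorem stmt16 [Fintype V] (G : SimpleGraph V) (n k l : ℕ)
    (hn : Fintype.card V = n) (hl : 2 ≤ l) (hnk : k < n)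
    (h : EveryKLIdentifying G k l) :
    (∀ x : V, n - k + l + 1 ≤ (closedNbhd G x).ncard ∧ (closedNbhd G x).ncard ≤ k - l) ∧
      (∀ x y : V, x ≠ y → (closedNbhd G x ∩ closedNbhd G y).ncard ≤ k - 2 * l + 1) ∧
      n ≤ 2 * k - 2 * l - 1 ∧ 2 * l + 2 ≤ k := by
  rw [← Nat.card_eq_fintype_card] at hn
  subst hn
  have lower := h.card_add_le_ncard_closedNbhd hl hnk
  have upper := h.ncard_closedNbhd_add_le hl hnk
  obtain ⟨x₀⟩ : Nonempty V := Finite.card_pos_iff.1 (by omega)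
  have h₀ := lower x₀
  have h₁ := upper x₀
  refine ⟨fun x => ⟨?_, ?_⟩, fun x y hxy => ?_, by omega, by omega⟩
  · have := lower x
    omega
  · have := upper x
    omega
  · have := h.ncard_closedNbhd_inter_add_le hl hnk hxy
    omega
end

section
/- Let ℓ ≥ 2. If G is a graph on n vertices with n > k such that every k-subset of vertices is a (1, ≤ℓ)-identifying set, then (ℓ−1)·n ≤ ℓ·(k−2); in particular n ≤ max{ℓ(k−2)/(ℓ−1), k} for any such G. -/
open Set

variable {V : Type*}

lemma aux_nbhd_insert (G : SimpleGraph V) (v : V) (X : Set V) :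
    nbhdSet G (insert v X) = closedNbhd G v ∪ nbhdSet G X := by
  simp [nbhdSet]

lemma aux_subset_nbhd (G : SimpleGraph V) (X : Set V) : X ⊆ nbhdSet G X :=
  fun _ hx => Set.mem_biUnion hx (Set.mem_insert _ _)

lemma aux_symm (A B : Set V) : symmDiff A (B ∪ A) = B \ A := by
  rw [symmDiff_def]; ext x; simp [Set.mem_union, Set.mem_diff]; tauto

section Key

variable [Fintype V] {G : SimpleGraph V} {l m : ℕ}

/-- Adding a vertex outside `X` gains at least `m+1` new covered vertices. -/
lemma diff_lower
    (H : ∀ X Y : Set V, X.ncard ≤ l → Y.ncard ≤ l → X ≠ Y →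
      m + 1 ≤ (symmDiff (nbhdSet G X) (nbhdSet G Y)).ncard)
    {X : Set V} {v : V} (hX : X.ncard + 1 ≤ l) (hv : v ∉ X) :
    m + 1 ≤ (closedNbhd G v \ nbhdSet G X).ncard := by
  have hne : X ≠ insert v X := by
    intro hEq
    have hmem : v ∈ insert v X := Set.mem_insert v X
    rw [← hEq] at hmem
    exact hv hmem
  have hc := H X (insert v X) (by omega)
    (by rw [Set.ncard_insert_of_notMem hv]; exact hX) hne
  rwa [aux_nbhd_insert, aux_symm] at hc

/-- In fact the gain is at least `m+2`. -/
lemma claimB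
    (H : ∀ X Y : Set V, X.ncard ≤ l → Y.ncard ≤ l → X ≠ Y →
      m + 1 ≤ (symmDiff (nbhdSet G X) (nbhdSet G Y)).ncard)
    (hm : 1 ≤ m) {X : Set V} {v : V} (hX : X.ncard + 2 ≤ l) (hv : v ∉ X) :
    m + 2 ≤ (closedNbhd G v \ nbhdSet G X).ncard := by
  by_contra hcon
  push_neg at hcon
  have h1 : m + 1 ≤ (closedNbhd G v \ nbhdSet G X).ncard :=
    diff_lower H (by omega) hv
  have hD : (closedNbhd G v \ nbhdSet G X).ncard = m + 1 := by omega
  obtain ⟨u, huD, huv⟩ := Set.exists_ne_of_one_lt_ncard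
    (show 1 < (closedNbhd G v \ nbhdSet G X).ncard by omega) v
  have huX : u ∉ X := fun hx => huD.2 (aux_subset_nbhd G X hx)
  have hvu : v ∉ insert u X := by
    intro hmem
    rcases Set.mem_insert_iff.1 hmem with h | h
    · exact huv h.symm
    · exact hv h
  have h2 := diff_lower H (X := insert u X) (v := v)
    (by rw [Set.ncard_insert_of_notMem huX]; omega) hvu
  have h3 : closedNbhd G v \ nbhdSet G (insert u X)
      = (closedNbhd G v \ nbhdSet G X) \ closedNbhd G u := by
    rw [aux_nbhd_insert]; ext x; simp [Set.mem_diff]; tauto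
  rw [h3] at h2
  have h4 : (closedNbhd G v \ nbhdSet G X) \ closedNbhd G u
      ⊆ (closedNbhd G v \ nbhdSet G X) \ {u} := by
    intro x hx
    refine ⟨hx.1, ?_⟩
    simp only [Set.mem_singleton_iff]
    intro he
    exact hx.2 (by rw [he]; exact Set.mem_insert _ _)
  have h5 := Set.ncard_le_ncard h4 (Set.toFinite _)
  rw [Set.ncard_diff_singleton_of_mem huD] at h5
  omega

/-- The complement of `N[X]` has at least `m+2` vertices. -/
lemma claimC
    (H : ∀ X Y : Set V, X.ncard ≤ l → Y.ncard ≤ l → X ≠ Y →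
      m + 1 ≤ (symmDiff (nbhdSet G X) (nbhdSet G Y)).ncard)
    (hm : 1 ≤ m) {X : Set V} (hX : X.ncard + 1 ≤ l) (hw : ∃ w, w ∉ X) :
    m + 2 ≤ ((nbhdSet G X)ᶜ).ncard := by
  by_contra hcon
  push_neg at hcon
  obtain ⟨w, hwX⟩ := hw
  have hsub : ∀ w, w ∉ X → closedNbhd G w \ nbhdSet G X ⊆ (nbhdSet G X)ᶜ :=
    fun w _ x hx => hx.2
  have hcard : ∀ w, w ∉ X → m + 1 ≤ (closedNbhd G w \ nbhdSet G X).ncard :=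
    fun w hw => diff_lower H hX hw
  have hT : ((nbhdSet G X)ᶜ).ncard = m + 1 := by
    have := le_trans (hcard w hwX) (Set.ncard_le_ncard (hsub w hwX) (Set.toFinite _))
    omega
  have heq : ∀ w, w ∉ X → closedNbhd G w \ nbhdSet G X = (nbhdSet G X)ᶜ := fun w hw =>
    Set.eq_of_subset_of_ncard_le (hsub w hw) (by rw [hT]; exact hcard w hw) (Set.toFinite _)
  have hTne : ((nbhdSet G X)ᶜ).Nonempty := by
    apply Set.nonempty_of_ncard_ne_zero; omega
  obtain ⟨v, hvT⟩ := hTne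
  obtain ⟨u, huT, huv⟩ := Set.exists_ne_of_one_lt_ncard (by omega : 1 < ((nbhdSet G X)ᶜ).ncard) v
  have hvX : v ∉ X := fun hx => hvT (aux_subset_nbhd G X hx)
  have huX : u ∉ X := fun hx => huT (aux_subset_nbhd G X hx)
  have huniv : ∀ w, w ∉ X → nbhdSet G (insert w X) = univ := by
    intro w hw
    rw [aux_nbhd_insert]
    apply Set.eq_univ_of_forall
    intro x
    by_cases hx : x ∈ nbhdSet G X
    · exact Or.inr hx
    · left
      have hx' : x ∈ closedNbhd G w \ nbhdSet G X := by
        rw [heq w hw]; exact hx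
      exact hx'.1
  have hne2 : insert u X ≠ insert v X := by
    intro hEq
    have hmem : v ∈ insert v X := Set.mem_insert v X
    rw [← hEq] at hmem
    rcases Set.mem_insert_iff.1 hmem with h | h
    · exact huv h.symm
    · exact hvX h
  have hcontr := H (insert u X) (insert v X)
    (by rw [Set.ncard_insert_of_notMem huX]; omega)
    (by rw [Set.ncard_insert_of_notMem hvX]; omega) hne2
  rw [huniv u huX, huniv v hvX, symmDiff_self] at hcontr
  simp only [Set.bot_eq_empty, Set.ncard_empty] at hcontr
  omega

/-- Chain construction: a `j`-set whose neighbourhood has at least `j*(m+2)` vertices. -/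
lemma chain
    (H : ∀ X Y : Set V, X.ncard ≤ l → Y.ncard ≤ l → X ≠ Y →
      m + 1 ≤ (symmDiff (nbhdSet G X) (nbhdSet G Y)).ncard)
    (hm : 1 ≤ m) (hV : 0 < Fintype.card V) :
    ∀ j, j + 1 ≤ l → ∃ X : Set V, X.ncard = j ∧ j * (m + 2) ≤ (nbhdSet G X).ncard := by
  intro j
  induction j with
  | zero => exact fun _ => ⟨∅, by simp, by simp⟩
  | succ j ih =>
    intro hj
    obtain ⟨X, hXc, hXn⟩ := ih (by omega)
    have hXne : X ≠ univ := by
      intro hEq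
      have h1 : X.ncard = Fintype.card V := by
        rw [hEq, Set.ncard_univ, Nat.card_eq_fintype_card]
      have h2 : (nbhdSet G X).ncard ≤ Fintype.card V := by
        have := Set.ncard_le_ncard (Set.subset_univ (nbhdSet G X)) (Set.toFinite _)
        rwa [Set.ncard_univ, Nat.card_eq_fintype_card] at this
      have h3 : j * 3 ≤ j * (m + 2) := Nat.mul_le_mul_left j (by omega)
      omega
    obtain ⟨v, hv⟩ := Set.ne_univ_iff_exists_notMem X |>.1 hXne
    refine ⟨insert v X, ?_, ?_⟩
    · rw [Set.ncard_insert_of_notMem hv, hXc]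
    · rw [aux_nbhd_insert, ← Set.diff_union_self,
        Set.ncard_union_eq Set.disjoint_sdiff_left (Set.toFinite _) (Set.toFinite _)]
      have hB := claimB H hm (X := X) (v := v) (by omega) hv
      have he : (j + 1) * (m + 2) = m + 2 + j * (m + 2) := by ring
      omega

end Key

theorem stmt17 [Fintype V] (G : SimpleGraph V) (n k l : ℕ)
    (hn : Fintype.card V = n) (hl : 2 ≤ l) (hnk : k < n)
    (h : EveryKLIdentifying G k l) :
    (l - 1) * n ≤ l * (k - 2) ∧
      (n : ℚ) ≤ max (((l : ℚ) * ((k : ℚ) - 2)) / ((l : ℚ) - 1)) (k : ℚ) := by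
  have H : ∀ X Y : Set V, X.ncard ≤ l → Y.ncard ≤ l → X ≠ Y →
      (n - k) + 1 ≤ (symmDiff (nbhdSet G X) (nbhdSet G Y)).ncard := by
    intro X Y hX hY hXY
    by_contra hcon
    push_neg at hcon
    have hc : k ≤ ((symmDiff (nbhdSet G X) (nbhdSet G Y))ᶜ).ncard := by
      have := Set.ncard_add_ncard_compl (symmDiff (nbhdSet G X) (nbhdSet G Y))
      rw [Nat.card_eq_fintype_card, hn] at this
      omega
    obtain ⟨C, hCsub, hCc⟩ := Set.exists_subset_card_eq hc
    refine h C hCc X Y hX hY hXY ?_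
    ext c
    simp only [Set.mem_inter_iff]
    constructor
    · rintro ⟨h1, h2⟩
      refine ⟨?_, h2⟩
      by_contra h3
      exact (hCsub h2) (Set.mem_symmDiff.2 (Or.inl ⟨h1, h3⟩))
    · rintro ⟨h1, h2⟩
      refine ⟨?_, h2⟩
      by_contra h3
      exact (hCsub h2) (Set.mem_symmDiff.2 (Or.inr ⟨h1, h3⟩))
  have hm : 1 ≤ n - k := by omega
  have hV : 0 < Fintype.card V := by omega
  obtain ⟨X, hXc, hXn⟩ := chain H hm hV (l - 1) (by omega)
  have hXex : ∃ w, w ∉ X := by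
    by_contra hno
    push_neg at hno
    have hEq : X = univ := Set.eq_univ_of_forall hno
    have h1 : X.ncard = n := by
      rw [hEq, Set.ncard_univ, Nat.card_eq_fintype_card, hn]
    have h2 : (nbhdSet G X).ncard ≤ n := by
      have := Set.ncard_le_ncard (Set.subset_univ (nbhdSet G X)) (Set.toFinite _)
      rwa [Set.ncard_univ, Nat.card_eq_fintype_card, hn] at this
    have h3 : (l - 1) * 3 ≤ (l - 1) * (n - k + 2) := Nat.mul_le_mul_left _ (by omega)
    omega
  have hC := claimC H hm (X := X) (by omega) hXex
  have htot := Set.ncard_add_ncard_compl (nbhdSet G X)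
  rw [Nat.card_eq_fintype_card, hn] at htot
  have hkey : l * (n - k + 2) ≤ n := by
    have hl1 : l - 1 + 1 = l := by omega
    have expand : l * (n - k + 2) = (l - 1) * (n - k + 2) + (n - k + 2) := by
      conv_lhs => rw [← hl1]
      ring
    omega
  have hk2 : 2 ≤ k := by
    have h2 : 2 * (n - k + 2) ≤ l * (n - k + 2) := Nat.mul_le_mul_right _ hl
    omega
  have hkZ : (l : ℤ) * ((n : ℤ) - k + 2) ≤ n := by
    have := hkey
    zify [Nat.le_of_lt hnk] at this
    linarith
  have goal1 : (l - 1) * n ≤ l * (k - 2) := by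
    zify [hk2, show 1 ≤ l by omega]
    nlinarith [hkZ]
  refine ⟨goal1, ?_⟩
  have hlq : (0 : ℚ) < (l : ℚ) - 1 := by
    have : (2 : ℚ) ≤ (l : ℚ) := by exact_mod_cast hl
    linarith
  refine le_trans ?_ (le_max_left _ _)
  rw [le_div_iff₀ hlq]
  have h3 : (((l - 1) * n : ℕ) : ℚ) ≤ ((l * (k - 2) : ℕ) : ℚ) := by exact_mod_cast goal1
  push_cast [Nat.cast_sub (show 1 ≤ l by omega), Nat.cast_sub hk2] at h3
  linarith
end

section
/- Let G be a graph on n vertices with n > k such that every k-subset of vertices is a (1, ≤2)-identifying set. Then n + ((n−k+2)/(n−1))·(n−k+3) ≤ 2k − 3. -/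
/-!
If `C` is `(1, ≤ 2)`-identifying and `u ≠ v`, then `C` must meet `N[u] \ N[v]`, since otherwise
`N[{v}] ∩ C = N[{u, v}] ∩ C`. When every `k`-set is identifying, this forces
`|N[u] \ N[v]| ≥ d := n - k + 1` for all `u ≠ v`. A Plotkin-type double count of
`∑_{u,v} |N[u] \ N[v]|` over the vertices `w` gives `n (n - 1) d ≤ n³ / 4`, i.e.
`4 (n - 1) d ≤ n²`. Since `n` and `d` are integers this yields `n ≥ 4d - 1`, and the stated
inequality is equivalent to `(d + 1)(d + 2) ≤ (n - 1)(n - 2d - 1)`.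
-/

open Set

variable {V : Type*}

section Plotkin

open Finset

variable {ι α : Type*} [Fintype ι] [Fintype α] [DecidableEq α]

theorem sum_sum_card_sdiff (N : ι → Finset α) :
    ∑ u, ∑ v, #(N u \ N v) = ∑ w, #{u | w ∈ N u} * #{v | w ∉ N v} := by
  have hcard (u v : ι) : #(N u \ N v) =
      ∑ w, (if w ∈ N u then 1 else 0) * (if w ∉ N v then 1 else 0) := by
    simp_rw [ite_zero_mul_ite_zero, mul_one, sum_boole]
    congr 1; ext w; simp
  simp_rw [hcard, card_filter, sum_mul_sum]
  exact (sum_congr rfl fun u _ => sum_comm).trans sum_comm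

theorem four_mul_sum_sum_card_sdiff_le (N : ι → Finset α) :
    4 * ∑ u, ∑ v, #(N u \ N v) ≤ Fintype.card α * Fintype.card ι ^ 2 := by
  rw [sum_sum_card_sdiff, mul_sum, ← smul_eq_mul (a := Fintype.card α), ← card_univ]
  refine sum_le_card_nsmul _ _ _ fun w _ => ?_
  have hsplit := card_filter_add_card_filter_not (s := univ) (fun u => w ∈ N u)
  rw [card_univ] at hsplit
  rw [← hsplit]
  nlinarith [sq_nonneg ((#{u | w ∈ N u} : ℤ) - #{v | w ∉ N v})]

theorem four_mul_card_sub_one_mul_le (N : ι → Finset α) {d : ℕ}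
    (hd : ∀ u v, u ≠ v → d ≤ #(N u \ N v)) :
    4 * ((Fintype.card ι - 1) * d) ≤ Fintype.card α * Fintype.card ι := by
  classical
  have hlow : Fintype.card ι * ((Fintype.card ι - 1) * d) ≤ ∑ u, ∑ v, #(N u \ N v) := by
    rw [← card_univ, ← smul_eq_mul]
    refine card_nsmul_le_sum _ _ _ fun u _ => ?_
    calc (Fintype.card ι - 1) * d = ∑ v ∈ Finset.univ.erase u, d := by
          rw [sum_const, card_erase_of_mem (mem_univ u), card_univ, smul_eq_mul]
      _ ≤ ∑ v ∈ Finset.univ.erase u, #(N u \ N v) :=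
          sum_le_sum fun v hv => hd u v (ne_of_mem_erase hv).symm
      _ ≤ ∑ v, #(N u \ N v) := sum_le_sum_of_subset (erase_subset _ _)
  rcases Nat.eq_zero_or_pos (Fintype.card ι) with h0 | hpos
  · simp [h0]
  · refine Nat.le_of_mul_le_mul_right ?_ hpos
    nlinarith [four_mul_sum_sum_card_sdiff_le N]

end Plotkin

theorem IsLIdentifying.inter_sdiff_nonempty {G : SimpleGraph V} {ℓ : ℕ} {C : Set V}
    (hC : IsLIdentifying G ℓ C) (hℓ : 2 ≤ ℓ) {u v : V} (huv : u ≠ v) :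
    (C ∩ (closedNbhd G u \ closedNbhd G v)).Nonempty := by
  by_contra hempty
  refine hC {v} {u, v} (by simp; omega) ((ncard_pair huv).trans_le hℓ)
    (fun hvu => huv (mem_singleton_iff.1 (hvu ▸ mem_insert u {v}))) ?_
  ext w
  simp only [nbhdSet, mem_singleton_iff, iUnion_iUnion_eq_left, mem_insert_iff,
    iUnion_iUnion_eq_or_left, mem_inter_iff, mem_union]
  constructor
  · exact fun ⟨hwv, hwC⟩ => ⟨Or.inr hwv, hwC⟩
  · rintro ⟨hwuv, hwC⟩
    exact ⟨hwuv.elim (fun hwu => not_not.1 fun hwv => hempty ⟨w, hwC, hwu, hwv⟩) id, hwC⟩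

theorem EveryKLIdentifying.sub_lt_ncard_sdiff [Finite V] {G : SimpleGraph V} {k : ℕ}
    (h : EveryKLIdentifying G k 2) (hk : k ≤ Nat.card V) {u v : V} (huv : u ≠ v) :
    Nat.card V - k < (closedNbhd G u \ closedNbhd G v).ncard := by
  by_contra! hsmall
  obtain ⟨C, hCsub, hCcard⟩ :=
    exists_subset_card_eq (s := (closedNbhd G u \ closedNbhd G v)ᶜ) (n := k)
      (by rw [ncard_compl]; omega)
  obtain ⟨w, hwC, hw⟩ := (h C hCcard).inter_sdiff_nonempty le_rfl huv
  exact hCsub hwC hw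

theorem EveryKLIdentifying.four_mul_le_sq [Fintype V] {G : SimpleGraph V} {k : ℕ}
    (h : EveryKLIdentifying G k 2) (hk : k ≤ Fintype.card V) :
    4 * ((Fintype.card V - 1) * (Fintype.card V - k + 1)) ≤ Fintype.card V ^ 2 := by
  classical
  rw [sq]
  refine four_mul_card_sub_one_mul_le (fun u => (closedNbhd G u).toFinset) fun u v huv => ?_
  rw [← toFinset_sdiff, ← ncard_eq_toFinset_card', ← Nat.card_eq_fintype_card]
  exact h.sub_lt_ncard_sdiff (Nat.card_eq_fintype_card (α := V) ▸ hk) huv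

theorem add_one_mul_add_two_le_of_four_mul_le_sq {n d : ℤ} (hn : 2 ≤ n) (hd : 2 ≤ d)
    (h : 4 * ((n - 1) * d) ≤ n ^ 2) : (d + 1) * (d + 2) ≤ (n - 1) * (n - 2 * d - 1) := by
  have hgap : 4 * d - 1 ≤ n := by
    by_contra! hlt
    nlinarith [mul_nonneg (sub_nonneg.2 hn) (show 0 ≤ 4 * d - 2 - n by linarith)]
  nlinarith [mul_nonneg (sub_nonneg.2 hgap) (show 0 ≤ n + 2 * d - 3 by linarith),
    sq_nonneg (d - 2)]

theorem stmt18 [Fintype V] (G : SimpleGraph V) (n k : ℕ)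
    (hn : Fintype.card V = n) (hn2 : 2 ≤ n) (hnk : k < n)
    (h : EveryKLIdentifying G k 2) :
    (n : ℚ) + (((n : ℚ) - k + 2) / ((n : ℚ) - 1)) * ((n : ℚ) - k + 3) ≤
      2 * (k : ℚ) - 3 := by
  have hcount : 4 * (((n : ℤ) - 1) * (n - k + 1)) ≤ (n : ℤ) ^ 2 := by
    have := h.four_mul_le_sq (hn ▸ hnk.le)
    rw [hn] at this
    zify [hnk.le, (by omega : 1 ≤ n)] at this
    exact this
  have hZ := add_one_mul_add_two_le_of_four_mul_le_sq (by exact_mod_cast hn2) (by omega) hcount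
  have hQ : ((n : ℚ) - k + 2) * ((n : ℚ) - k + 3) ≤ (n - 1) * (2 * k - 3 - n) := by
    have := (Int.cast_le (R := ℚ)).2 hZ
    push_cast at this
    linarith
  have hn1 : (0 : ℚ) < n - 1 := by
    have : (2 : ℚ) ≤ n := by exact_mod_cast hn2
    linarith
  rw [div_mul_eq_mul_div, ← le_sub_iff_add_le', div_le_iff₀ hn1]
  linarith
end
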